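/- arXiv:1811.02995 — 8 statements merged into one kernel-verified Lean document; each statement's English description precedes it below -/
import Mathlib

section
/- Let Γ be a digraph having neither sinks nor sources. Then the automorphism group of the partial line graph Pl(Γ) (whose vertices are the arcs of Γ, with an arc from (x,y) to (w,z) whenever y = w) is isomorphic to the automorphism group of Γ. -/
variable {V : Type*}

/-- The automorphism group of a digraph given by its arc relation `E`. -/
def autGroup (E : V → V → Prop) : Subgroup (Equiv.Perm V) where
  carrier := {g | ∀ u v : V, E u v ↔ E (g u) (g v)}
  one_mem' := by intro u v; simp
  mul_mem' := by
    intro a b ha hb u v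
    simpa [Equiv.Perm.mul_apply] using (hb u v).trans (ha (b u) (b v))
  inv_mem' := by
    intro a ha u v
    simpa using (ha (a⁻¹ u) (a⁻¹ v)).symm

/-- Connectedness of a digraph (in the underlying undirected sense). -/
def DConnected (E : V → V → Prop) : Prop :=
  ∀ u v : V, Relation.ReflTransGen (fun a b => E a b ∨ E b a) u v

/-- `f : Fin (k+1) → V` is a `k`-arc. -/
def IsKArc (E : V → V → Prop) (k : ℕ) (f : Fin (k + 1) → V) : Prop :=
  ∀ i : Fin k, E (f i.castSucc) (f i.succ)

def KArcTransitive (E : V → V → Prop) (k : ℕ) : Prop :=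
  ∀ f g : Fin (k + 1) → V, IsKArc E k f → IsKArc E k g →
    ∃ a ∈ autGroup E, ∀ i, (a : Equiv.Perm V) (f i) = g i

def HighlyArcTransitive (E : V → V → Prop) : Prop :=
  ∀ k : ℕ, KArcTransitive E k

def VertexTransitive (E : V → V → Prop) : Prop :=
  ∀ u v : V, ∃ a ∈ autGroup E, (a : Equiv.Perm V) u = v

def ArcTransitive (E : V → V → Prop) : Prop :=
  ∀ u v x y : V, E u v → E x y →
    ∃ a ∈ autGroup E, (a : Equiv.Perm V) u = x ∧ (a : Equiv.Perm V) v = y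

/-- Reachability in the underlying undirected graph avoiding the vertex set `S`. -/
def ReachAvoid (E : V → V → Prop) (S : Set V) : V → V → Prop :=
  Relation.ReflTransGen (fun a b => (E a b ∨ E b a) ∧ a ∉ S ∧ b ∉ S)

/-- `u` lies in an infinite component of the complement of `S`. -/
def InfComp (E : V → V → Prop) (S : Set V) (u : V) : Prop :=
  u ∉ S ∧ {w | ReachAvoid E S u w}.Infinite

/-- A connected digraph with exactly two ends. -/
def TwoEnded (E : V → V → Prop) : Prop :=
  DConnected E ∧
  (∀ S : Set V, S.Finite → ∀ u v w : V, InfComp E S u → InfComp E S v → InfComp E S w →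
    ReachAvoid E S u v ∨ ReachAvoid E S u w ∨ ReachAvoid E S v w) ∧
  ∃ S : Set V, S.Finite ∧ ∃ u v : V, InfComp E S u ∧ InfComp E S v ∧ ¬ ReachAvoid E S u v

/-- The stabilizer of a vertex `v` in the automorphism group. -/
def vStab (E : V → V → Prop) (v : V) : Subgroup (autGroup E) where
  carrier := {g | (g : Equiv.Perm V) v = v}
  one_mem' := rfl
  mul_mem' := by
    intro a b ha hb
    simp only [Set.mem_setOf_eq] at *
    simp [Subgroup.coe_mul, Equiv.Perm.mul_apply, ha, hb]
  inv_mem' := by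
    intro a ha
    simp only [Set.mem_setOf_eq] at *
    have := congrArg (((a : Equiv.Perm V))⁻¹ : Equiv.Perm V) ha
    simpa using this.symm

def outSet (E : V → V → Prop) (v : V) : Set V := {u | E v u}
def inSet (E : V → V → Prop) (v : V) : Set V := {u | E u v}

/-- The stabilizer of `v` acts quasi-primitively on the set `Ω`. -/
def QuasiPrimitivelyOn (E : V → V → Prop) (v : V) (Ω : Set V) : Prop :=
  (∀ u ∈ Ω, ∀ w ∈ Ω, ∃ g ∈ vStab E v, ((g : autGroup E) : Equiv.Perm V) u = w) ∧
  (∀ N : Subgroup (vStab E v), N.Normal →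
    (∀ n ∈ N, ∀ u ∈ Ω, (((n : vStab E v) : autGroup E) : Equiv.Perm V) u = u) ∨
    (∀ u ∈ Ω, ∀ w ∈ Ω, ∃ n ∈ N, (((n : vStab E v) : autGroup E) : Equiv.Perm V) u = w))
universe u v

/-- A bundled digraph. -/
structure Digr : Type (u + 1) where
  V : Type u
  E : V → V → Prop

/-- The type of arcs of a digraph. -/
def Digr.Arc (D : Digr) : Type _ := {p : D.V × D.V // D.E p.1 p.2}

/-- The partial line graph: vertices are the arcs, with an arc from `(x,y)` to `(w,z)` iff `y = w`. -/
def Pl (D : Digr) : Digr := ⟨D.Arc, fun a b => a.1.2 = b.1.1⟩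

/-- The `r`-fold iterated partial line graph. -/
def PlIter : ℕ → Digr → Digr
  | 0, D => D
  | r + 1, D => Pl (PlIter r D)

/-- The digraph `Δ_p` on `ℤ × ZMod p` with all arcs `((i,x),(i+1,y))`. -/
def Delta (p : ℕ) : Digr := ⟨ℤ × ZMod p, fun a b => b.1 = a.1 + 1⟩

/-- Two arcs are related if they share an initial vertex or a terminal vertex;
the alternet relation is the equivalence relation generated by this. -/
def altRel (D : Digr) : D.Arc → D.Arc → Prop :=
  Relation.EqvGen (fun a b => a.1.1 = b.1.1 ∨ a.1.2 = b.1.2)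

def altSetoid (D : Digr) : Setoid D.Arc :=
  ⟨altRel D, Relation.EqvGen.is_equivalence _⟩

/-- The digraph of alternets: vertices are alternets, with an arc `(A, B)` whenever
a sink of `A` (a terminal vertex of an arc of `A`) is a source of `B`
(an initial vertex of an arc of `B`). -/
def Al (D : Digr) : Digr :=
  ⟨Quotient (altSetoid D),
    fun A B => ∃ a b : D.Arc, Quotient.mk (altSetoid D) a = A ∧
      Quotient.mk (altSetoid D) b = B ∧ a.1.2 = b.1.1⟩

/-- Isomorphism of digraphs. -/
def DigrIso (D₁ : Digr.{u}) (D₂ : Digr.{v}) : Prop :=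
  ∃ e : D₁.V ≃ D₂.V, ∀ u v : D₁.V, D₁.E u v ↔ D₂.E (e u) (e v)

/-! An automorphism `f` of `Pl(Γ)` maps arcs with a common head to arcs with a common head:
since `Γ` has no sinks they have a common out-neighbour in `Pl(Γ)`, and so do their images.
As `Γ` has no sources, every vertex `v` is the head of some arc `a`, and `v ↦ head (f a)` is then
a well-defined automorphism of `Γ` whose induced map on arcs is `f`. -/

section PartialLineGraph

variable {W : Type u} {E : W → W → Prop}

theorem mem_autGroup_of_map_rel {G : Type*} [Group G] (φ : G →* Equiv.Perm W)
    (h : ∀ x u v, E u v → E (φ x u) (φ x v)) (x : G) : φ x ∈ autGroup E := by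
  have hinv : ∀ w, φ x⁻¹ (φ x w) = w := fun w => by
    rw [← Equiv.Perm.mul_apply, ← map_mul, inv_mul_cancel, map_one, Equiv.Perm.one_apply]
  exact fun u v => ⟨h x u v, fun huv => by simpa only [hinv] using h x⁻¹ _ _ huv⟩

/-- The map `φ : Aut(Γ) → Aut(Pl(Γ))`, acting diagonally on arcs. -/
def autGroupToPl (E : W → W → Prop) : autGroup E →* autGroup (Pl ⟨W, E⟩).E where
  toFun g :=
    ⟨((g : Equiv.Perm W).prodCongr (g : Equiv.Perm W)).subtypeEquiv fun p => g.2 p.1 p.2,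
      fun _ _ => (g : Equiv.Perm W).apply_eq_iff_eq.symm⟩
  map_one' := rfl
  map_mul' _ _ := rfl

theorem head_apply_eq_of_head_eq (hsink : ∀ v, ∃ u, E v u)
    (f : autGroup (Pl ⟨W, E⟩).E) {a b : (Pl ⟨W, E⟩).V} (h : a.1.2 = b.1.2) :
    ((f : Equiv.Perm _) a).1.2 = ((f : Equiv.Perm _) b).1.2 := by
  obtain ⟨u, hu⟩ := hsink a.1.2
  let c : (Pl ⟨W, E⟩).V := ⟨(a.1.2, u), hu⟩
  exact ((f.2 a c).mp rfl).trans ((f.2 b c).mp h.symm).symm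

noncomputable def arcWithHead (hsource : ∀ v, ∃ u, E u v) (v : W) : (Pl ⟨W, E⟩).V :=
  ⟨((hsource v).choose, v), (hsource v).choose_spec⟩

noncomputable def vertexMap (hsource : ∀ v, ∃ u, E u v) (f : autGroup (Pl ⟨W, E⟩).E) (v : W) :
    W :=
  ((f : Equiv.Perm _) (arcWithHead hsource v)).1.2

theorem vertexMap_head (hsink : ∀ v, ∃ u, E v u) (hsource : ∀ v, ∃ u, E u v)
    (f : autGroup (Pl ⟨W, E⟩).E) (a : (Pl ⟨W, E⟩).V) :
    vertexMap hsource f a.1.2 = ((f : Equiv.Perm _) a).1.2 :=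
  head_apply_eq_of_head_eq hsink f rfl

theorem vertexMap_tail (hsource : ∀ v, ∃ u, E u v) (f : autGroup (Pl ⟨W, E⟩).E)
    (a : (Pl ⟨W, E⟩).V) : vertexMap hsource f a.1.1 = ((f : Equiv.Perm _) a).1.1 :=
  (f.2 (arcWithHead hsource a.1.1) a).mp rfl

theorem vertexMap_rel (hsink : ∀ v, ∃ u, E v u) (hsource : ∀ v, ∃ u, E u v)
    (f : autGroup (Pl ⟨W, E⟩).E) {u v : W} (h : E u v) :
    E (vertexMap hsource f u) (vertexMap hsource f v) := by
  let a : (Pl ⟨W, E⟩).V := ⟨(u, v), h⟩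
  rw [vertexMap_tail hsource f a, vertexMap_head hsink hsource f a]
  exact ((f : Equiv.Perm _) a).2

noncomputable def vertexEnd (hsink : ∀ v, ∃ u, E v u) (hsource : ∀ v, ∃ u, E u v) :
    autGroup (Pl ⟨W, E⟩).E →* Function.End W where
  toFun := vertexMap hsource
  map_one' := rfl
  map_mul' f _ := funext fun _ => (vertexMap_head hsink hsource f _).symm

noncomputable def autGroupOfPl (hsink : ∀ v, ∃ u, E v u) (hsource : ∀ v, ∃ u, E u v) :
    autGroup (Pl ⟨W, E⟩).E →* autGroup E :=
  (vertexEnd hsink hsource).toHomPerm.codRestrict _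
    (mem_autGroup_of_map_rel _ fun f _ _ => vertexMap_rel hsink hsource f)

end PartialLineGraph

/-- If a digraph `Γ` has neither sinks nor sources, then the automorphism
group of its partial line graph `Pl(Γ)` is isomorphic to the automorphism group of `Γ`. -/
theorem aut_partial_line_graph_iso {V : Type u} (E : V → V → Prop)
    (hnosink : ∀ v : V, ∃ u : V, E v u)
    (hnosource : ∀ v : V, ∃ u : V, E u v) :
    Nonempty (↥(autGroup (Pl (Digr.mk V E)).E) ≃* ↥(autGroup E)) := by
  refine ⟨MonoidHom.toMulEquiv (autGroupOfPl hnosink hnosource) (autGroupToPl E) ?_ ?_⟩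
  · ext f a
    exact Subtype.ext <|
      Prod.ext (vertexMap_tail hnosource f a) (vertexMap_head hnosink hnosource f a)
  · ext g v
    rfl
end

section
/- Let Γ be a connected vertex-transitive digraph with Property Z, witnessed by a surjective digraph homomorphism φ: Γ → Z⃗ with fibres Γ_i = φ⁻¹(i). If the pointwise stabilizer G_{(Γ_0)} of Γ_0 in G = Aut(Γ) acts transitively on out(v) for some vertex v ∈ Γ_0, then Γ is k-arc-transitive for every k ≥ 1 (i.e., highly-arc-transitive). -/
variable {V : Type*}

/-! Since `Γ` is connected and arcs raise `φ` by exactly one, every automorphism shifts `φ` by a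
constant. Conjugating by vertex-transitivity, the pointwise stabilizer of any fibre `Γₙ` is
transitive on `out(p)` for each `p ∈ Γₙ`. Such an automorphism can be replaced by the identity on
all levels below `n`: arcs only join consecutive levels and `Γₙ` is fixed, so the glued map is
still an automorphism. It then fixes every earlier vertex of a `k`-arc ending at `p`, so a map
between two arcs can be extended one vertex at a time. -/

def FibreStabilizerTransitiveOnOut (E : V → V → Prop) (φ : V → ℤ) (v : V) : Prop :=
  ∀ u w, E v u → E v w → ∃ g ∈ autGroup E, (∀ x, φ x = φ v → g x = x) ∧ g u = w

section LevelFunction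

variable {E : V → V → Prop} {φ : V → ℤ}

lemma level_apply_of_mem_autGroup (hconn : DConnected E)
    (hhom : ∀ u v : V, E u v → φ v = φ u + 1) {g : Equiv.Perm V} (hg : g ∈ autGroup E)
    (x y : V) : φ (g x) = φ x + (φ (g y) - φ y) := by
  induction hconn y x with
  | refl => ring
  | @tail b c _ hbc ih =>
    rcases hbc with h | h
    · have := hhom _ _ h
      have := hhom _ _ ((hg b c).mp h)
      omega
    · have := hhom _ _ h
      have := hhom _ _ ((hg c b).mp h)
      omega

lemma mem_autGroup_of_level_preserving (hhom : ∀ u v : V, E u v → φ v = φ u + 1)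
    {g : Equiv.Perm V} (hlevel : ∀ x, φ (g x) = φ x)
    (harc : ∀ u w, φ w = φ u + 1 → (E u w ↔ E (g u) (g w))) : g ∈ autGroup E := by
  intro u w
  by_cases huw : φ w = φ u + 1
  · exact harc u w huw
  · exact iff_of_false (fun h => huw (hhom _ _ h))
      (fun h => huw (by simpa only [hlevel] using hhom _ _ h))

lemma exists_mem_autGroup_fix_le_of_fix_level (hhom : ∀ u v : V, E u v → φ v = φ u + 1)
    {g : Equiv.Perm V} (hg : g ∈ autGroup E) (hlevel : ∀ x, φ (g x) = φ x) (n : ℤ)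
    (hfix : ∀ x, φ x = n → g x = x) :
    ∃ g' ∈ autGroup E, (∀ x, φ x ≤ n → g' x = x) ∧ ∀ x, n < φ x → g' x = g x := by
  classical
  have hpres : ∀ x, n < φ (g x) ↔ n < φ x := fun x => by rw [hlevel]
  set g' := Equiv.Perm.ofSubtype (g.subtypePerm (p := fun x => n < φ x) hpres)
  have hbelow : ∀ x, φ x ≤ n → g' x = x := fun x hx =>
    Equiv.Perm.ofSubtype_apply_of_not_mem _ (not_lt.mpr hx)
  have habove : ∀ x, n < φ x → g' x = g x := fun x hx =>
    Equiv.Perm.ofSubtype_subtypePerm_of_mem hpres hx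
  -- As `g` fixes level `n`, `g'` agrees with `g` on `n ≤ φ`,
  -- and every arc lies in `n ≤ φ` or in `φ ≤ n`.
  have hfrom : ∀ x, n ≤ φ x → g' x = g x := fun x hx => by
    rcases hx.lt_or_eq with hx | hx
    · exact habove x hx
    · rw [hbelow x hx.ge, hfix x hx.symm]
  refine ⟨g', mem_autGroup_of_level_preserving hhom (fun x => ?_) (fun u w huw => ?_),
    hbelow, habove⟩
  · by_cases hx : n < φ x
    · rw [habove x hx, hlevel]
    · rw [hbelow x (not_lt.mp hx)]
  · by_cases hu : n ≤ φ u
    · rw [hfrom u hu, hfrom w (by omega)]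
      exact hg u w
    · rw [hbelow u (by omega), hbelow w (by omega)]

lemma fibreStabilizerTransitiveOnOut_of_vertexTransitive (hconn : DConnected E)
    (hvt : VertexTransitive E) (hhom : ∀ u v : V, E u v → φ v = φ u + 1) {v : V}
    (hv : FibreStabilizerTransitiveOnOut E φ v) (p : V) :
    FibreStabilizerTransitiveOnOut E φ p := by
  intro u w hpu hpw
  obtain ⟨a, ha, hav⟩ := hvt v p
  have hainv : ∀ x, φ (a⁻¹ x) = φ x - φ p + φ v := fun x => by
    have := level_apply_of_mem_autGroup hconn hhom ha (a⁻¹ x) v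
    simp only [Equiv.Perm.coe_inv, Equiv.apply_symm_apply, hav] at this ⊢
    omega
  have hout_a : ∀ y, E p y → E v (a⁻¹ y) := fun y hy =>
    (ha v _).mpr (by rwa [hav, Equiv.Perm.coe_inv, Equiv.apply_symm_apply])
  obtain ⟨g, hg, hgfix, hguw⟩ := hv _ _ (hout_a u hpu) (hout_a w hpw)
  refine ⟨a * g * a⁻¹, mul_mem (mul_mem ha hg) (inv_mem ha), fun x hx => ?_, ?_⟩
  · simp only [Equiv.Perm.mul_apply]
    rw [hgfix _ (by rw [hainv, hx, sub_self, zero_add]), Equiv.Perm.coe_inv,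
      Equiv.apply_symm_apply]
  · simp only [Equiv.Perm.mul_apply]
    rw [hguw, Equiv.Perm.coe_inv, Equiv.apply_symm_apply]

lemma exists_mem_autGroup_fix_le_map_out (hconn : DConnected E)
    (hhom : ∀ u v : V, E u v → φ v = φ u + 1) {p u w : V}
    (hp : FibreStabilizerTransitiveOnOut E φ p) (hpu : E p u) (hpw : E p w) :
    ∃ h ∈ autGroup E, (∀ x, φ x ≤ φ p → h x = x) ∧ h u = w := by
  obtain ⟨c, hc, hcfix, hcuw⟩ := hp u w hpu hpw
  have hclevel : ∀ x, φ (c x) = φ x := fun x => by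
    rw [level_apply_of_mem_autGroup hconn hhom hc x p, hcfix p rfl, sub_self, add_zero]
  obtain ⟨h, hh, hhfix, hhc⟩ :=
    exists_mem_autGroup_fix_le_of_fix_level hhom hc hclevel (φ p) hcfix
  refine ⟨h, hh, hhfix, ?_⟩
  rw [hhc u (by rw [hhom _ _ hpu]; omega), hcuw]

lemma IsKArc.level_apply (hhom : ∀ u v : V, E u v → φ v = φ u + 1) {k : ℕ}
    {f : Fin (k + 1) → V} (hf : IsKArc E k f) (i : Fin (k + 1)) :
    φ (f i) = φ (f 0) + i := by
  induction i using Fin.induction with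
  | zero => simp
  | succ i ih =>
    rw [hhom _ _ (hf i), ih, Fin.val_succ, Fin.val_castSucc]
    push_cast
    ring

lemma kArcTransitive_succ (hhom : ∀ u v : V, E u v → φ v = φ u + 1)
    (hext : ∀ p u w, E p u → E p w → ∃ h ∈ autGroup E, (∀ x, φ x ≤ φ p → h x = x) ∧ h u = w)
    {k : ℕ} (hk : KArcTransitive E k) : KArcTransitive E (k + 1) := by
  intro f g hf hg
  have hinit : ∀ {f : Fin (k + 2) → V}, IsKArc E (k + 1) f → IsKArc E k (Fin.init f) :=
    fun hf i => by simpa only [Fin.init, Fin.succ_castSucc] using hf i.castSucc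
  obtain ⟨a, ha, hai⟩ := hk _ _ (hinit hf) (hinit hg)
  have hlast : E (g (Fin.last k).castSucc) (a (f (Fin.last (k + 1)))) := by
    have harc := (ha _ _).mp (hf (Fin.last k))
    rwa [show a (f (Fin.last k).castSucc) = g (Fin.last k).castSucc from hai _] at harc
  obtain ⟨h, hh, hhfix, hhlast⟩ := hext _ _ _ hlast (hg (Fin.last k))
  refine ⟨h * a, mul_mem hh ha, Fin.lastCases hhlast fun i => ?_⟩
  rw [Equiv.Perm.mul_apply, show a (f i.castSucc) = g i.castSucc from hai i]
  apply hhfix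
  rw [hg.level_apply hhom i.castSucc, hg.level_apply hhom (Fin.last k).castSucc]
  simp only [Fin.val_castSucc, Fin.val_last]
  have := i.is_le
  omega

lemma highlyArcTransitive_of_exists_fix_le_map_out (hvt : VertexTransitive E)
    (hhom : ∀ u v : V, E u v → φ v = φ u + 1)
    (hext : ∀ p u w, E p u → E p w → ∃ h ∈ autGroup E, (∀ x, φ x ≤ φ p → h x = x) ∧ h u = w) :
    HighlyArcTransitive E := by
  intro k
  induction k with
  | zero =>
    intro f g _ _
    obtain ⟨a, ha, hav⟩ := hvt (f 0) (g 0)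
    exact ⟨a, ha, fun i => by rwa [Fin.fin_one_eq_zero i]⟩
  | succ k ih => exact kArcTransitive_succ hhom hext ih

end LevelFunction

theorem highly_arc_transitive_of_fibre_stabilizer_out_transitive_general
    {V : Type*} (E : V → V → Prop)
    (hconn : DConnected E) (hvt : VertexTransitive E)
    (φ : V → ℤ)
    (hhom : ∀ u v : V, E u v → φ v = φ u + 1)
    (htrans : ∃ v : V, φ v = 0 ∧ ∀ u w : V, E v u → E v w →
      ∃ g : Equiv.Perm V, g ∈ autGroup E ∧ (∀ x : V, φ x = 0 → g x = x) ∧ g u = w) :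
    ∀ k : ℕ, 1 ≤ k → KArcTransitive E k := by
  obtain ⟨v, hv0, hv⟩ := htrans
  have hfibre : FibreStabilizerTransitiveOnOut E φ v := by
    simpa only [FibreStabilizerTransitiveOnOut, hv0] using hv
  intro k _
  exact highlyArcTransitive_of_exists_fix_le_map_out hvt hhom (fun p _ _ hpu hpw =>
    exists_mem_autGroup_fix_le_map_out hconn hhom
      (fibreStabilizerTransitiveOnOut_of_vertexTransitive hconn hvt hhom hfibre p) hpu hpw) k

/-- A connected vertex-transitive digraph with Property Z, such that the
pointwise stabilizer of the fibre `Γ₀` acts transitively on `out(v)` for some `v ∈ Γ₀`,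
is `k`-arc-transitive for every `k ≥ 1`, i.e. highly-arc-transitive. -/
theorem highly_arc_transitive_of_fibre_stabilizer_out_transitive
    {V : Type*} (E : V → V → Prop)
    (hconn : DConnected E) (hvt : VertexTransitive E)
    (φ : V → ℤ) (hsurj : Function.Surjective φ)
    (hhom : ∀ u v : V, E u v → φ v = φ u + 1)
    (htrans : ∃ v : V, φ v = 0 ∧ ∀ u w : V, E v u → E v w →
      ∃ g : Equiv.Perm V, g ∈ autGroup E ∧ (∀ x : V, φ x = 0 → g x = x) ∧ g u = w) :
    ∀ k : ℕ, 1 ≤ k → KArcTransitive E k :=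
  highly_arc_transitive_of_fibre_stabilizer_out_transitive_general E hconn hvt φ hhom htrans
end

section
/- Let Γ be a connected vertex-transitive digraph with Property Z and G = Aut(Γ), with fibres Γ_i as above. If the pointwise stabilizer G_{(Γ_0)} is non-trivial, then G is uncountable. -/
variable {V : Type*}

/-!
Every automorphism of a connected digraph with Property Z shifts the levels `φ` by a constant,
so vertex-transitivity provides an automorphism `a` raising all levels by one, while `g`
preserves every level. Since `Γ_j` separates the vertices below it from those above it, an
automorphism fixing `Γ_j` pointwise may be replaced by the identity below `Γ_j`. Reversing all
arcs if necessary, `g` moves a vertex above `Γ_0`, so we may choose `j` such that `g` fixes `Γ_j`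
pointwise and moves a vertex of `Γ_{j+1}`; truncating `g` at `Γ_j` yields `h`, and the
conjugates `aⁿ h a⁻ⁿ` fix all levels up to `j + n` and move a vertex at level `j + n + 1`. For
every `S ⊆ ℕ` the infinite product of the conjugates with `n ∈ S` converges pointwise, since only
finitely many factors act on any given level, and distinct `S` give distinct automorphisms: this
embeds the power set of `ℕ` into `G`.
-/

open Equiv

section

variable {E : V → V → Prop} {φ : V → ℤ}

theorem autGroup_flip (E : V → V → Prop) : autGroup (flip E) = autGroup E := by
  ext b
  exact ⟨fun hb u v => hb v u, fun hb u v => hb v u⟩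

theorem level_inv_apply {σ : Perm V} (hσ : ∀ x, φ (σ x) = φ x) (x : V) : φ (σ⁻¹ x) = φ x := by
  simpa using (hσ (σ⁻¹ x)).symm

theorem level_pow_apply {a : Perm V} (ha : ∀ x, φ (a x) = φ x + 1) (n : ℕ) (x : V) :
    φ ((a ^ n) x) = φ x + n := by
  induction n with
  | zero => simp
  | succ n ih => rw [pow_succ', Perm.mul_apply, ha, ih]; push_cast; ring

theorem level_pow_inv_apply {a : Perm V} (ha : ∀ x, φ (a x) = φ x + 1) (n : ℕ) (x : V) :
    φ ((a ^ n)⁻¹ x) = φ x - n := by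
  have := level_pow_apply ha n ((a ^ n)⁻¹ x)
  simp only [Perm.coe_inv, apply_symm_apply] at this ⊢
  omega

theorem level_apply_sub_eq (hconn : DConnected E) (hhom : ∀ u v, E u v → φ v = φ u + 1)
    {b : Perm V} (hb : b ∈ autGroup E) (x y : V) : φ (b x) - φ x = φ (b y) - φ y := by
  induction hconn x y with
  | refl => rfl
  | tail _ hstep ih =>
    rw [ih]
    rcases hstep with h | h
    · have := hhom _ _ h
      have := hhom _ _ ((hb _ _).mp h)
      omega
    · have := hhom _ _ h
      have := hhom _ _ ((hb _ _).mp h)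
      omega

def truncate (φ : V → ℤ) (j : ℤ) (g : Perm V) (hg : ∀ x, φ (g x) = φ x) : Perm V :=
  Perm.ofSubtype (g.subtypePerm (p := fun x => j ≤ φ x) fun x => by rw [hg])

theorem truncate_apply_of_le {j : ℤ} {g : Perm V} (hg : ∀ x, φ (g x) = φ x) {x : V}
    (hx : j ≤ φ x) : truncate φ j g hg x = g x := by
  rw [truncate, Perm.ofSubtype_apply_of_mem (p := fun y => j ≤ φ y) _ hx, Perm.subtypePerm_apply]

theorem truncate_apply_of_lt {j : ℤ} {g : Perm V} (hg : ∀ x, φ (g x) = φ x) {x : V}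
    (hx : φ x < j) : truncate φ j g hg x = x := by
  rw [truncate, Perm.ofSubtype_apply_of_not_mem (p := fun y => j ≤ φ y) _ (not_le.mpr hx)]

/-- No arc joins a vertex below `Γ_j` to one above it, so `G_{(Γ_j)}` splits into the parts
acting above and below `Γ_j`. -/
theorem truncate_mem_autGroup (hhom : ∀ u v, E u v → φ v = φ u + 1) {j : ℤ} {g : Perm V}
    (hgE : g ∈ autGroup E) (hg : ∀ x, φ (g x) = φ x) (hfix : ∀ x, φ x = j → g x = x) :
    truncate φ j g hg ∈ autGroup E := by
  intro u v
  rcases le_or_gt j (φ u) with hu | hu <;> rcases le_or_gt j (φ v) with hv | hv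
  · rw [truncate_apply_of_le hg hu, truncate_apply_of_le hg hv]
    exact hgE u v
  · rw [truncate_apply_of_le hg hu, truncate_apply_of_lt hg hv]
    exact iff_of_false (fun h => by linarith [hhom _ _ h]) (fun h => by linarith [hhom _ _ h, hg u])
  · rw [truncate_apply_of_lt hg hu, truncate_apply_of_le hg hv]
    by_cases hvj : φ v = j
    · rw [hfix v hvj]
    · refine iff_of_false (fun h => ?_) (fun h => ?_)
      · have := hhom _ _ h
        omega
      · have := hhom _ _ h
        have := hg v
        omega
  · rw [truncate_apply_of_lt hg hu, truncate_apply_of_lt hg hv]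

theorem level_truncate_apply {j : ℤ} {g : Perm V} (hg : ∀ x, φ (g x) = φ x) (x : V) :
    φ (truncate φ j g hg x) = φ x := by
  rcases le_or_gt j (φ x) with hx | hx
  · rw [truncate_apply_of_le hg hx, hg]
  · rw [truncate_apply_of_lt hg hx]

theorem exists_fixes_level_moves_succ {g : Perm V} {i : ℤ} (hfix : ∀ x, φ x = i → g x = x)
    {x : V} (hx : g x ≠ x) (hix : i < φ x) :
    ∃ j : ℤ, (∀ y, φ y = j → g y = y) ∧ ∃ y, φ y = j + 1 ∧ g y ≠ y := by
  classical
  have hmoves : ∃ k : ℕ, ∃ y, φ y = i + k + 1 ∧ g y ≠ y :=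
    ⟨(φ x - i - 1).toNat, x, by omega, hx⟩
  refine ⟨i + Nat.find hmoves, fun y hy => ?_, Nat.find_spec hmoves⟩
  by_contra hgy
  obtain ⟨k, hk⟩ : ∃ k, Nat.find hmoves = k + 1 :=
    Nat.exists_eq_succ_of_ne_zero fun h0 => hgy (hfix y (by omega))
  exact Nat.find_min hmoves (by omega : k < Nat.find hmoves) ⟨y, by omega, hgy⟩

section StableLimit

variable {p : ℕ → Perm V} (hp : ∀ N x, φ (p N x) = φ x)

/-- The pointwise limit of `p`, provided `p` is constant from index `N` on at every vertex of
level `≤ N` (see `stableLimit_apply_of_le`). -/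
def stableLimit : Perm V where
  toFun x := p (φ x).toNat x
  invFun x := (p (φ x).toNat)⁻¹ x
  left_inv x := by simp only [hp, Perm.coe_inv, symm_apply_apply]
  right_inv x := by
    simp only [level_inv_apply (hp _)]
    simp only [Perm.coe_inv, apply_symm_apply]

theorem apply_eq_of_level_le (hstab : ∀ (N : ℕ) x, φ x ≤ N → p (N + 1) x = p N x) {x : V}
    {N M : ℕ} (hN : φ x ≤ N) (hNM : N ≤ M) : p M x = p N x := by
  induction M, hNM using Nat.le_induction with
  | base => rfl
  | succ M hNM ih => rw [hstab M x (by omega), ih]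

theorem stableLimit_apply_of_le (hstab : ∀ (N : ℕ) x, φ x ≤ N → p (N + 1) x = p N x) {x : V}
    {N : ℕ} (hN : φ x ≤ N) : stableLimit hp x = p N x := by
  change p (φ x).toNat x = p N x
  rcases le_total (φ x).toNat N with h | h
  · exact (apply_eq_of_level_le hstab (Int.self_le_toNat _) h).symm
  · exact apply_eq_of_level_le hstab hN h

theorem stableLimit_mem_autGroup (hstab : ∀ (N : ℕ) x, φ x ≤ N → p (N + 1) x = p N x)
    (hE : ∀ N, p N ∈ autGroup E) : stableLimit hp ∈ autGroup E := by
  intro u v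
  let N := max (φ u).toNat (φ v).toNat
  rw [stableLimit_apply_of_le hp hstab (by omega : φ u ≤ N),
    stableLimit_apply_of_le hp hstab (by omega : φ v ≤ N)]
  exact hE N u v

end StableLimit

section InfiniteProduct

variable (h : ℕ → Perm V)

open scoped Classical in
noncomputable def partialProd (S : Set ℕ) : ℕ → Perm V
  | 0 => 1
  | N + 1 => (if N ∈ S then h N else 1) * partialProd S N

variable {h}

theorem level_partialProd_apply (hφ : ∀ n x, φ (h n x) = φ x) (S : Set ℕ) (N : ℕ) (x : V) :
    φ (partialProd h S N x) = φ x := by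
  induction N with
  | zero => rfl
  | succ N ih =>
    rw [partialProd, Perm.mul_apply]
    split_ifs <;> simp only [hφ, ih, Perm.one_apply]

theorem partialProd_succ_apply_of_level_le (hφ : ∀ n x, φ (h n x) = φ x)
    (hfix : ∀ (n : ℕ) x, φ x ≤ n → h n x = x) (S : Set ℕ) (N : ℕ) (x : V) (hx : φ x ≤ N) :
    partialProd h S (N + 1) x = partialProd h S N x := by
  rw [partialProd, Perm.mul_apply]
  split_ifs
  · exact hfix N _ (by rwa [level_partialProd_apply hφ])
  · rfl

theorem partialProd_mem_autGroup (hE : ∀ n, h n ∈ autGroup E) (S : Set ℕ) (N : ℕ) :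
    partialProd h S N ∈ autGroup E := by
  induction N with
  | zero => exact one_mem _
  | succ N ih =>
    refine mul_mem ?_ ih
    split_ifs
    exacts [hE N, one_mem _]

/-- The infinite product `⋯ h n₂ * h n₁` over `n₁ < n₂ < ⋯` in `S`. -/
noncomputable def infiniteProd (hφ : ∀ n x, φ (h n x) = φ x) (S : Set ℕ) : Perm V :=
  stableLimit (level_partialProd_apply hφ S)

variable (hφ : ∀ n x, φ (h n x) = φ x)

theorem infiniteProd_apply_of_le (hfix : ∀ (n : ℕ) x, φ x ≤ n → h n x = x) (S : Set ℕ)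
    {N : ℕ} {x : V} (hx : φ x ≤ N) : infiniteProd hφ S x = partialProd h S N x :=
  stableLimit_apply_of_le _ (partialProd_succ_apply_of_level_le hφ hfix S) hx

theorem infiniteProd_mem_autGroup (hfix : ∀ (n : ℕ) x, φ x ≤ n → h n x = x)
    (hE : ∀ n, h n ∈ autGroup E) (S : Set ℕ) : infiniteProd hφ S ∈ autGroup E :=
  stableLimit_mem_autGroup _ (partialProd_succ_apply_of_level_le hφ hfix S)
    (partialProd_mem_autGroup hE S)

theorem mem_iff_mem_of_infiniteProd_eq (hfix : ∀ (n : ℕ) x, φ x ≤ n → h n x = x)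
    {S T : Set ℕ} (hST : infiniteProd hφ S = infiniteProd hφ T) {n : ℕ}
    (hn : partialProd h S n = partialProd h T n) {y : V} (hy : φ y = n + 1)
    (hmove : h n y ≠ y) : n ∈ S ↔ n ∈ T := by
  classical
  -- at `z` both infinite products are their `(n + 1)`-st partial products, which differ at most
  -- in the factor `h n`
  set z := (partialProd h S n)⁻¹ y
  have hz : φ z ≤ (n + 1 : ℕ) := by
    rw [level_inv_apply (level_partialProd_apply hφ S n), hy]; push_cast; rfl
  have key := congrArg (· z) hST
  simp only [infiniteProd_apply_of_le hφ hfix _ hz, partialProd, Perm.mul_apply] at key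
  have hz_image : partialProd h S n z = y := by simp [z]
  rw [← hn, hz_image] at key
  split_ifs at key <;> tauto

theorem infiniteProd_injective (hfix : ∀ (n : ℕ) x, φ x ≤ n → h n x = x)
    (hmove : ∀ n : ℕ, ∃ y, φ y = n + 1 ∧ h n y ≠ y) : Function.Injective (infiniteProd hφ) := by
  intro S T hST
  have hmem (n : ℕ) (hn : partialProd h S n = partialProd h T n) : n ∈ S ↔ n ∈ T :=
    have ⟨y, hy, hy_moved⟩ := hmove n
    mem_iff_mem_of_infiniteProd_eq hφ hfix hST hn hy hy_moved
  classical
  have hprod (n : ℕ) : partialProd h S n = partialProd h T n := by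
    induction n with
    | zero => rfl
    | succ n ih =>
      rw [partialProd, partialProd, ih]
      exact congrArg (· * _) (if_congr (hmem n ih) rfl rfl)
  ext n
  exact hmem n (hprod n)

end InfiniteProduct

theorem not_countable_autGroup_of_level_fixing_seq {h : ℕ → Perm V}
    (hE : ∀ n, h n ∈ autGroup E) (hφ : ∀ n x, φ (h n x) = φ x)
    (hfix : ∀ (n : ℕ) x, φ x ≤ n → h n x = x)
    (hmove : ∀ n : ℕ, ∃ y, φ y = n + 1 ∧ h n y ≠ y) : ¬ Countable (autGroup E) := by
  rintro ⟨f, hf⟩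
  refine Function.cantor_injective
    (fun S => f ⟨infiniteProd hφ S, infiniteProd_mem_autGroup hφ hfix hE S⟩) ?_
  exact hf.comp fun S T hST => infiniteProd_injective hφ hfix hmove (congrArg Subtype.val hST)

theorem not_countable_autGroup_of_conj_seq {a h : Perm V} (haE : a ∈ autGroup E)
    (ha : ∀ x, φ (a x) = φ x + 1) (hE : h ∈ autGroup E) (hφ : ∀ x, φ (h x) = φ x)
    (hfix : ∀ x, φ x ≤ 0 → h x = x) {y : V} (hy : φ y = 1) (hmove : h y ≠ y) :
    ¬ Countable (autGroup E) := by
  refine not_countable_autGroup_of_level_fixing_seq (φ := φ)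
    (h := fun n => a ^ n * h * (a ^ n)⁻¹) (fun n => ?_) (fun n x => ?_) (fun n x hx => ?_)
    (fun n => ⟨(a ^ n) y, ?_, ?_⟩)
  · exact mul_mem (mul_mem (pow_mem haE n) hE) (inv_mem (pow_mem haE n))
  · simp only [Perm.mul_apply, level_pow_apply ha, hφ, level_pow_inv_apply ha]
    ring
  · have : φ ((a ^ n)⁻¹ x) ≤ 0 := by rw [level_pow_inv_apply ha]; omega
    rw [Perm.mul_apply, Perm.mul_apply, hfix _ this, Perm.coe_inv, apply_symm_apply]
  · rw [level_pow_apply ha, hy]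
    ring
  · simpa using hmove

theorem not_countable_autGroup_of_fixes_level_of_lt (hhom : ∀ u v, E u v → φ v = φ u + 1)
    {a g : Perm V} (haE : a ∈ autGroup E) (ha : ∀ x, φ (a x) = φ x + 1) (hgE : g ∈ autGroup E)
    (hg : ∀ x, φ (g x) = φ x) {i : ℤ} (hfix : ∀ x, φ x = i → g x = x) {x : V} (hx : g x ≠ x)
    (hix : i < φ x) : ¬ Countable (autGroup E) := by
  obtain ⟨j, hfix_j, y, hy, hmove⟩ := exists_fixes_level_moves_succ hfix hx hix
  refine not_countable_autGroup_of_conj_seq (φ := fun x => φ x - j) (y := y) haE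
    (fun x => by simp only [ha]; ring) (truncate_mem_autGroup hhom hgE hg hfix_j)
    (fun x => by simp only [level_truncate_apply]) (fun x hx => ?_) (by simp only [hy]; ring)
    ?_
  · rcases (sub_nonpos.mp hx).lt_or_eq with hlt | heq
    · exact truncate_apply_of_lt hg hlt
    · rw [truncate_apply_of_le hg heq.ge, hfix_j x heq]
  · rwa [truncate_apply_of_le hg (by omega)]

theorem not_countable_autGroup_of_fixes_level (hhom : ∀ u v, E u v → φ v = φ u + 1)
    {a g : Perm V} (haE : a ∈ autGroup E) (ha : ∀ x, φ (a x) = φ x + 1) (hgE : g ∈ autGroup E)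
    (hg : ∀ x, φ (g x) = φ x) {i : ℤ} (hfix : ∀ x, φ x = i → g x = x) {x : V} (hx : g x ≠ x)
    (hix : φ x ≠ i) : ¬ Countable (autGroup E) := by
  rcases hix.lt_or_gt with hlt | hgt
  · rw [← autGroup_flip]
    refine not_countable_autGroup_of_fixes_level_of_lt (E := flip E) (φ := fun z => -φ z)
      (a := a⁻¹) (fun u v huv => by simp only [hhom v u huv]; ring)
      (by rw [autGroup_flip]; exact inv_mem haE) (fun z => ?_) (by rwa [autGroup_flip])
      (fun z => by simp only [hg]) (fun z hz => hfix z (neg_inj.mp hz)) hx (neg_lt_neg hlt)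
    have := level_pow_inv_apply ha 1 z
    rw [pow_one] at this
    simp only [this]
    ring
  · exact not_countable_autGroup_of_fixes_level_of_lt hhom haE ha hgE hg hfix hx hgt

end

/-- If a connected vertex-transitive digraph with Property Z has a
non-trivial pointwise stabilizer of the fibre `Γ₀`, then its automorphism group is
uncountable. -/
theorem uncountable_aut_of_nontrivial_fibre_stabilizer
    {V : Type*} (E : V → V → Prop)
    (hconn : DConnected E) (hvt : VertexTransitive E)
    (φ : V → ℤ) (hsurj : Function.Surjective φ)
    (hhom : ∀ u v : V, E u v → φ v = φ u + 1)
    (hnt : ∃ g : Equiv.Perm V, g ∈ autGroup E ∧ (∀ x : V, φ x = 0 → g x = x) ∧ g ≠ 1) :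
    ¬ Countable ↥(autGroup E) := by
  obtain ⟨g, hgE, hgfix, hg1⟩ := hnt
  obtain ⟨x, hx⟩ : ∃ x, g x ≠ x := not_forall.mp fun h => hg1 (Equiv.ext h)
  obtain ⟨x₀, hx₀⟩ := hsurj 0
  obtain ⟨x₁, hx₁⟩ := hsurj 1
  obtain ⟨a, haE, hax₀⟩ := hvt x₀ x₁
  have hg (z : V) : φ (g z) = φ z := by
    have := level_apply_sub_eq hconn hhom hgE z x₀
    rw [hgfix x₀ hx₀] at this
    omega
  have ha (z : V) : φ (a z) = φ z + 1 := by
    have := level_apply_sub_eq hconn hhom haE z x₀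
    rw [hax₀, hx₀, hx₁] at this
    omega
  exact not_countable_autGroup_of_fixes_level hhom haE ha hgE hg hgfix hx
    fun h => hx (hgfix x h)
end

section
/- Let Γ be a connected vertex-transitive digraph with Property Z and G = Aut(Γ), with fibres Γ_i. If G_{(Γ_0)} is non-trivial and each set Γ_i is finite, then G_{(Γ_0)} acts non-trivially on both Γ_{-1} and Γ_1. -/
variable {V : Type*}

/-!
Automorphisms shift the level `φ` by a constant, and conjugation by an automorphism `a` of shift
`1` carries statements about the fibre `Γᵢ` to `Γᵢ₊₁`. Suppose the pointwise stabilizer of `Γ₀`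
fixed `Γ₁`; then the pointwise stabilizer of each `Γᵢ` fixes every fibre above it. If some `h`
fixed `Γ₁` but moved `y ∈ Γ₀`, the conjugates `aⁿ h a⁻ⁿ` would fix every level above `n` while
moving `aⁿ y`, so no two of them would agree on `Γ₀`: infinitely many distinct maps `Γ₀ → Γ₀`,
contradicting finiteness. Hence the stabilizers of `Γ₀` and `Γ₁` coincide, by conjugation so do
those of all fibres, and the stabilizer of `Γ₀` is trivial. For `Γ₋₁`, reverse the levels.
-/

open Equiv

def FixesFibre (ψ : V → ℤ) (i : ℤ) (g : Perm V) : Prop :=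
  ∀ x, ψ x = i → g x = x

section FibreStabilizer

variable {A : Subgroup (Perm V)} {ψ : V → ℤ} {a b g h : Perm V}

theorem level_inv_apply_s3 {n : ℤ} (hb : ∀ x, ψ (b x) = ψ x + n) (x : V) :
    ψ (b⁻¹ x) = ψ x - n := by
  have := hb (b⁻¹ x)
  rw [← Perm.mul_apply, mul_inv_cancel, Perm.one_apply] at this
  omega

theorem FixesFibre.conj {i n : ℤ} (hb : ∀ x, ψ (b x) = ψ x + n) (hg : FixesFibre ψ i g) :
    FixesFibre ψ (i + n) (b * g * b⁻¹) := by
  intro x hx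
  have hbx : ψ (b⁻¹ x) = i := by rw [level_inv_apply_s3 hb, hx, add_sub_cancel_right]
  rw [Perm.mul_apply, Perm.mul_apply, hg _ hbx, ← Perm.mul_apply, mul_inv_cancel, Perm.one_apply]

theorem level_zpow_apply (ha : ∀ x, ψ (a x) = ψ x + 1) (n : ℤ) (x : V) :
    ψ ((a ^ n) x) = ψ x + n := by
  induction n generalizing x with
  | zero => simp
  | succ n ih => rw [zpow_add_one, Perm.mul_apply, ih, ha]; ring
  | pred n ih => rw [zpow_sub_one, Perm.mul_apply, ih, level_inv_apply_s3 ha]; ring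

theorem level_apply_eq_of_apply_eq_self (hs : ∀ u v, ψ (g u) - ψ u = ψ (g v) - ψ v) {x₀ : V}
    (hx₀ : g x₀ = x₀) (x : V) : ψ (g x) = ψ x := by
  have := hs x x₀
  rw [hx₀] at this
  omega

theorem fixesFibre_shift (ha : a ∈ A) (haψ : ∀ x, ψ (a x) = ψ x + 1) {k l : ℤ}
    (hkl : ∀ g ∈ A, FixesFibre ψ k g → FixesFibre ψ l g) (i : ℤ) (hg : g ∈ A)
    (hgi : FixesFibre ψ (i + k) g) : FixesFibre ψ (i + l) g := by
  have hk : FixesFibre ψ k (a ^ (-i) * g * (a ^ (-i))⁻¹) := by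
    simpa using hgi.conj (level_zpow_apply haψ (-i))
  have hk_mem : a ^ (-i) * g * (a ^ (-i))⁻¹ ∈ A :=
    mul_mem (mul_mem (zpow_mem ha _) hg) (inv_mem (zpow_mem ha _))
  have hl := (hkl _ hk_mem hk).conj (level_zpow_apply haψ i)
  have hconj : a ^ i * (a ^ (-i) * g * (a ^ (-i))⁻¹) * (a ^ i)⁻¹ = g := by group
  rwa [hconj, add_comm] at hl

theorem FixesFibre.apply_eq_of_le (hsucc : ∀ i, FixesFibre ψ i g → FixesFibre ψ (i + 1) g)
    {i : ℤ} (hi : FixesFibre ψ i g) {x : V} (hx : i ≤ ψ x) : g x = x :=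
  Int.leInduction (motive := fun j _ => FixesFibre ψ j g) hi (fun j _ => hsucc j) (ψ x) hx x rfl

theorem eqOn_of_eqOn_fibre (hsucc : ∀ i, ∀ g ∈ A, FixesFibre ψ i g → FixesFibre ψ (i + 1) g)
    (hg : g ∈ A) (hh : h ∈ A) {i : ℤ} (heq : ∀ x, ψ x = i → g x = h x) {x : V} (hx : i ≤ ψ x) :
    g x = h x := by
  have hfix : FixesFibre ψ i (h⁻¹ * g) := fun y hy => by
    rw [Perm.mul_apply, heq y hy, Perm.inv_eq_iff_eq]
  have := hfix.apply_eq_of_le (fun j => hsucc j _ (mul_mem (inv_mem hh) hg)) hx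
  rwa [Perm.mul_apply, Perm.inv_eq_iff_eq] at this

theorem fixesFibre_zero_of_fixesFibre_one (hs : ∀ g ∈ A, ∀ u v, ψ (g u) - ψ u = ψ (g v) - ψ v)
    (ha : a ∈ A) (haψ : ∀ x, ψ (a x) = ψ x + 1) (hfin : (ψ ⁻¹' {0}).Finite)
    (hsucc : ∀ i, ∀ g ∈ A, FixesFibre ψ i g → FixesFibre ψ (i + 1) g)
    (hh : h ∈ A) (h1 : FixesFibre ψ 1 h) : FixesFibre ψ 0 h := by
  intro y hy
  by_contra hmoved
  set conj : ℕ → Perm V := fun n => a ^ (n : ℤ) * h * (a ^ (n : ℤ))⁻¹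
  have conj_mem (n : ℕ) : conj n ∈ A :=
    mul_mem (mul_mem (zpow_mem ha _) hh) (inv_mem (zpow_mem ha _))
  have fixes (n : ℕ) {x : V} (hx : (n : ℤ) + 1 ≤ ψ x) : conj n x = x :=
    (h1.conj (level_zpow_apply haψ n)).apply_eq_of_le (fun i => hsucc i _ (conj_mem n)) (by omega)
  have moves (n : ℕ) : conj n ((a ^ (n : ℤ)) y) ≠ (a ^ (n : ℤ)) y := by
    simpa [conj, Perm.mul_apply] using hmoved
  have mapsTo (n : ℕ) {x : V} (hx : ψ x = 0) : ψ (conj n x) = 0 := by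
    have hfix := fixes n (x := (a ^ ((n : ℤ) + 1)) y) (by rw [level_zpow_apply haψ]; omega)
    rw [level_apply_eq_of_apply_eq_self (hs _ (conj_mem n)) hfix, hx]
  have hinj : Function.Injective fun n (x : ψ ⁻¹' {0}) => conj n x := by
    refine .of_lt_imp_ne fun n m hnm heq => moves m ?_
    have hlevel : ψ ((a ^ (m : ℤ)) y) = m := by rw [level_zpow_apply haψ, hy, zero_add]
    rw [eqOn_of_eqOn_fibre hsucc (conj_mem m) (conj_mem n) (fun x hx => congrFun heq.symm ⟨x, hx⟩)
      (by omega), fixes n (by omega)]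
  have := hfin.to_subtype
  refine Set.infinite_range_of_injective hinj ((Set.Finite.pi fun _ => hfin).subset ?_)
  rintro _ ⟨n, rfl⟩ x -
  exact mapsTo n x.2

theorem exists_fixesFibre_zero_moves_fibre_one
    (hs : ∀ g ∈ A, ∀ u v, ψ (g u) - ψ u = ψ (g v) - ψ v)
    (ha : a ∈ A) (haψ : ∀ x, ψ (a x) = ψ x + 1) (hfin : (ψ ⁻¹' {0}).Finite)
    (hg : g ∈ A) (hg0 : FixesFibre ψ 0 g) (hg1 : g ≠ 1) :
    ∃ h ∈ A, FixesFibre ψ 0 h ∧ ∃ v, ψ v = 1 ∧ h v ≠ v := by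
  by_contra! hup
  have hsucc (i : ℤ) : ∀ g ∈ A, FixesFibre ψ i g → FixesFibre ψ (i + 1) g := fun g hg hgi =>
    fixesFibre_shift ha haψ hup i hg (by rwa [add_zero])
  have hdown : ∀ h ∈ A, FixesFibre ψ 1 h → FixesFibre ψ 0 h := fun h hh =>
    fixesFibre_zero_of_fixesFibre_one hs ha haψ hfin hsucc hh
  have hall (i : ℤ) : FixesFibre ψ i g := by
    induction i with
    | zero => exact hg0
    | succ i ih => exact hsucc i g hg ih
    | pred i ih => simpa using fixesFibre_shift ha haψ hdown (-i - 1) hg (by simpa using ih)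
  exact hg1 (Perm.ext fun x => hall (ψ x) x rfl)

theorem exists_fixesFibre_zero_moves_fibre_neg_one
    (hs : ∀ g ∈ A, ∀ u v, ψ (g u) - ψ u = ψ (g v) - ψ v)
    (ha : a ∈ A) (haψ : ∀ x, ψ (a x) = ψ x + 1) (hfin : (ψ ⁻¹' {0}).Finite)
    (hg : g ∈ A) (hg0 : FixesFibre ψ 0 g) (hg1 : g ≠ 1) :
    ∃ h ∈ A, FixesFibre ψ 0 h ∧ ∃ v, ψ v = -1 ∧ h v ≠ v := by
  have hs' (f : Perm V) (hf : f ∈ A) (u v : V) : -ψ (f u) - -ψ u = -ψ (f v) - -ψ v := by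
    have := hs f hf u v
    omega
  have haψ' (x : V) : -ψ (a⁻¹ x) = -ψ x + 1 := by
    rw [level_inv_apply_s3 haψ]
    ring
  obtain ⟨h, hA, h0, v, hv, hmoved⟩ :=
    exists_fixesFibre_zero_moves_fibre_one (ψ := fun x => -ψ x) hs' (inv_mem ha) haψ'
      (hfin.subset fun x hx => by simpa using hx) hg (fun x hx => hg0 x (neg_eq_zero.mp hx)) hg1
  exact ⟨h, hA, fun x hx => h0 x (neg_eq_zero.mpr hx), v, neg_eq_iff_eq_neg.mp hv, hmoved⟩

end FibreStabilizer

theorem level_sub_eq_of_mem_autGroup {E : V → V → Prop} (hconn : DConnected E) {φ : V → ℤ}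
    (hhom : ∀ u v : V, E u v → φ v = φ u + 1) {g : Perm V} (hg : g ∈ autGroup E) (u v : V) :
    φ (g u) - φ u = φ (g v) - φ v := by
  have hg' : ∀ u v, E u v ↔ E (g u) (g v) := hg
  induction hconn u v with
  | refl => rfl
  | tail _ hbc ih =>
    rcases hbc with h | h
    · have := hhom _ _ h; have := hhom _ _ ((hg' _ _).1 h); omega
    · have := hhom _ _ h; have := hhom _ _ ((hg' _ _).1 h); omega

/-- If a connected vertex-transitive digraph with Property Z has finite
fibres and a non-trivial pointwise stabilizer of the fibre `Γ₀`, then this stabilizer acts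
non-trivially on both `Γ₋₁` and `Γ₁`. -/
theorem fibre_stabilizer_nontrivial_on_both_sides
    {V : Type*} (E : V → V → Prop)
    (hconn : DConnected E) (hvt : VertexTransitive E)
    (φ : V → ℤ) (hsurj : Function.Surjective φ)
    (hhom : ∀ u v : V, E u v → φ v = φ u + 1)
    (hfin : ∀ i : ℤ, (φ ⁻¹' {i}).Finite)
    (hnt : ∃ g : Equiv.Perm V, g ∈ autGroup E ∧ (∀ x : V, φ x = 0 → g x = x) ∧ g ≠ 1) :
    (∃ g : Equiv.Perm V, g ∈ autGroup E ∧ (∀ x : V, φ x = 0 → g x = x) ∧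
      ∃ v : V, φ v = 1 ∧ g v ≠ v) ∧
    (∃ g : Equiv.Perm V, g ∈ autGroup E ∧ (∀ x : V, φ x = 0 → g x = x) ∧
      ∃ v : V, φ v = -1 ∧ g v ≠ v) := by
  obtain ⟨g, hg, hg0, hg1⟩ := hnt
  have hs := fun g (hg : g ∈ autGroup E) => level_sub_eq_of_mem_autGroup hconn hhom hg
  obtain ⟨u, hu⟩ := hsurj 0
  obtain ⟨v, hv⟩ := hsurj 1
  obtain ⟨a, ha, hav⟩ := hvt u v
  have haφ (x : V) : φ (a x) = φ x + 1 := by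
    have := hs a ha x u
    rw [hav] at this
    omega
  exact ⟨exists_fixesFibre_zero_moves_fibre_one hs ha haφ (hfin 0) hg hg0 hg1,
    exists_fixesFibre_zero_moves_fibre_neg_one hs ha haφ (hfin 0) hg hg0 hg1⟩
end

section
/- Let Γ be a connected vertex-transitive digraph with Property Z such that, for some vertex v, the stabilizer G_v acts quasi-primitively on both in(v) and out(v), where G = Aut(Γ). If the pointwise stabilizer G_{(Γ_0)} of the fibre Γ_0 is non-trivial, then Γ is highly-arc-transitive. -/
/-!
Reversing every arc swaps in- and out-neighbourhoods and replaces `φ` by `-φ`, so one direction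
suffices. Every automorphism shifts all levels by the same amount. Cutting `g` along the fibre
`Γ₀` gives a non-trivial automorphism `h` fixing every vertex on one side of `Γ₀`, say every
vertex of level `≤ 0`. If `z` is a vertex of least level moved by `h` and `u` is an in-neighbour
of `z`, conjugating `h` by an automorphism sending `v` to `u` gives an element of `G_v` that fixes
all levels `≤ φ v` pointwise but moves a vertex of `out(v)`. The pointwise stabiliser in `G_v` of
these levels is normal in `G_v`, so by quasi-primitivity it is transitive on `out(v)`; this lets
every map between `k`-arcs be extended to one between `(k+1)`-arcs.
-/

variable {V : Type*}

open Equiv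

section

variable {E : V → V → Prop} {φ : V → ℤ}

def IsHomToZ (E : V → V → Prop) (φ : V → ℤ) : Prop :=
  ∀ u v, E u v → φ v = φ u + 1

def PastFixingTransitiveOut (E : V → V → Prop) (φ : V → ℤ) (u : V) : Prop :=
  ∀ x y, E u x → E u y → ∃ a ∈ autGroup E, a x = y ∧ ∀ w, φ w ≤ φ u → a w = w

theorem DConnected.flip (h : DConnected E) : DConnected (flip E) :=
  fun u v => Relation.ReflTransGen.mono (fun _ _ => Or.symm) u v (h u v)

theorem VertexTransitive.flip (h : VertexTransitive E) : VertexTransitive (flip E) := by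
  simpa only [VertexTransitive, autGroup_flip] using h

theorem IsHomToZ.flip (h : IsHomToZ E φ) : IsHomToZ (flip E) (-φ) := fun u v huv => by
  simp [h v u huv]

theorem IsKArc.flip_comp_rev {k : ℕ} {f : Fin (k + 1) → V} (hf : IsKArc E k f) :
    IsKArc (flip E) k (f ∘ Fin.rev) := fun i => by
  simpa only [Function.comp, flip, Fin.rev_castSucc, Fin.rev_succ] using hf i.rev

theorem HighlyArcTransitive.of_flip (h : HighlyArcTransitive (flip E)) :
    HighlyArcTransitive E := fun k f g hf hg => by
  obtain ⟨a, ha, hfg⟩ := h k _ _ hf.flip_comp_rev hg.flip_comp_rev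
  exact ⟨a, autGroup_flip E ▸ ha, fun i => by simpa using hfg i.rev⟩

theorem DConnected.exists_adj (h : DConnected E) {x y : V} (hxy : x ≠ y) : ∃ u v, E u v := by
  rcases (h x y).cases_head with rfl | ⟨c, hxc | hcx, -⟩
  · exact absurd rfl hxy
  · exact ⟨_, _, hxc⟩
  · exact ⟨_, _, hcx⟩

theorem VertexTransitive.exists_adj_left (h : VertexTransitive E) {u v : V} (huv : E u v)
    (w : V) : ∃ x, E x w := by
  obtain ⟨a, ha, rfl⟩ := h v w
  exact ⟨a u, (ha u v).1 huv⟩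

theorem level_sub_eq (hconn : DConnected E) (hφ : IsHomToZ E φ) {a : Perm V}
    (ha : a ∈ autGroup E) (x y : V) : φ (a x) - φ x = φ (a y) - φ y := by
  induction hconn x y with
  | refl => rfl
  | tail _ hbc ih =>
    rcases hbc with hbc | hcb
    · have := hφ _ _ hbc; have := hφ _ _ ((ha _ _).1 hbc); omega
    · have := hφ _ _ hcb; have := hφ _ _ ((ha _ _).1 hcb); omega

theorem level_le_iff (hconn : DConnected E) (hφ : IsHomToZ E φ) {a : Perm V}
    (ha : a ∈ autGroup E) (x y : V) : φ (a x) ≤ φ (a y) ↔ φ x ≤ φ y := by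
  have := level_sub_eq hconn hφ ha x y
  omega

theorem exists_minimal_moved {h : Perm V} {n : ℤ} (hfix : ∀ w, φ w ≤ n → h w = w)
    (hne : h ≠ 1) : ∃ z, h z ≠ z ∧ ∀ w, φ w < φ z → h w = w := by
  obtain ⟨z, hz⟩ : ∃ z, h z ≠ z := by
    by_contra! hall
    exact hne (Perm.ext hall)
  obtain ⟨m, ⟨z, rfl, hz⟩, hmin⟩ := Int.exists_least_of_bdd
    (P := fun m => ∃ z, φ z = m ∧ h z ≠ z)
    ⟨n, fun m ⟨z, hzm, hz⟩ => by by_contra; exact hz (hfix z (by omega))⟩ ⟨_, z, rfl, hz⟩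
  exact ⟨z, hz, fun w hw => by_contra fun hw' => absurd (hmin _ ⟨w, rfl, hw'⟩) (by omega)⟩

theorem mem_autGroup_of_levelwise (hφ : IsHomToZ E φ) {h : Perm V}
    (hlev : ∀ x, φ (h x) = φ x)
    (hloc : ∀ u v, φ v = φ u + 1 → ∃ a ∈ autGroup E, a u = h u ∧ a v = h v) :
    h ∈ autGroup E := fun u v => by
  by_cases huv : φ v = φ u + 1
  · obtain ⟨a, ha, hau, hav⟩ := hloc u v huv
    rw [← hau, ← hav]
    exact ha u v
  · refine ⟨fun e => absurd (hφ _ _ e) huv, fun e => absurd ?_ huv⟩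
    simpa only [hlev] using hφ _ _ e

theorem exists_nontrivial_fixing_nonpos_or_nonneg (hconn : DConnected E)
    (hsurj : Function.Surjective φ) (hφ : IsHomToZ E φ) {g : Perm V} (hg : g ∈ autGroup E)
    (hfix : ∀ x, φ x = 0 → g x = x) (hne : g ≠ 1) :
    (∃ h ∈ autGroup E, (∀ w, φ w ≤ 0 → h w = w) ∧ h ≠ 1) ∨
      (∃ h ∈ autGroup E, (∀ w, 0 ≤ φ w → h w = w) ∧ h ≠ 1) := by
  obtain ⟨x₀, hx₀⟩ := hsurj 0
  have hlev (x : V) : φ (g x) = φ x := by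
    have := level_sub_eq hconn hφ hg x x₀
    rw [hfix x₀ hx₀] at this
    omega
  have hpos (x : V) : 0 < φ (g x) ↔ 0 < φ x := by rw [hlev]
  -- `h` agrees with `g` above the fibre `Γ₀` and with the identity below it
  set h := Perm.ofSubtype (g.subtypePerm (p := fun x => 0 < φ x) hpos)
  have h_nonpos (x : V) (hx : φ x ≤ 0) : h x = x :=
    Perm.ofSubtype_subtypePerm_of_not_mem hpos (by omega)
  have h_nonneg (x : V) (hx : 0 ≤ φ x) : h x = g x := by
    rcases hx.eq_or_lt with hx | hx
    · rw [h_nonpos x hx.ge, hfix x hx.symm]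
    · exact Perm.ofSubtype_subtypePerm_of_mem hpos hx
  by_cases h1 : h = 1
  · refine .inr ⟨g, hg, fun w hw => ?_, hne⟩
    rw [← h_nonneg w hw, h1, Perm.one_apply]
  · refine .inl ⟨h, mem_autGroup_of_levelwise hφ (fun x => ?_) (fun u v huv => ?_), h_nonpos, h1⟩
    · rcases le_total 0 (φ x) with hx | hx
      · rw [h_nonneg x hx, hlev]
      · rw [h_nonpos x hx]
    · rcases le_or_gt 0 (φ u) with hu | hu
      · exact ⟨g, hg, (h_nonneg u hu).symm, (h_nonneg v (by omega)).symm⟩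
      · exact ⟨1, one_mem _, (h_nonpos u hu.le).symm, (h_nonpos v (by omega)).symm⟩

theorem QuasiPrimitivelyOn.exists_fixing_apply_eq {v : V} {Ω S : Set V}
    (hqp : QuasiPrimitivelyOn E v Ω) (hS : ∀ b ∈ autGroup E, b v = v → ∀ x ∈ S, b x ∈ S)
    {c : Perm V} (hc : c ∈ autGroup E) (hcv : c v = v) (hcS : ∀ x ∈ S, c x = x)
    {z : V} (hz : z ∈ Ω) (hcz : c z ≠ z) {x y : V} (hx : x ∈ Ω) (hy : y ∈ Ω) :
    ∃ a ∈ autGroup E, a x = y ∧ ∀ w ∈ S, a w = w := by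
  have hN : (fixingSubgroup (vStab E v) S).Normal := by
    refine ⟨fun n hn b => (mem_fixingSubgroup_iff _).2 fun w hw => ?_⟩
    have hbw : b⁻¹ • w ∈ S := hS _ (b⁻¹ : vStab E v).1.2 (b⁻¹ : vStab E v).2 w hw
    rw [mul_smul, mul_smul, (mem_fixingSubgroup_iff _).1 hn _ hbw, smul_inv_smul]
  rcases hqp.2 _ hN with htriv | htrans
  · exact absurd (htriv ⟨⟨c, hc⟩, hcv⟩ ((mem_fixingSubgroup_iff _).2 hcS) z hz) hcz
  · obtain ⟨n, hn, rfl⟩ := htrans x hx y hy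
    exact ⟨_, n.1.2, rfl, (mem_fixingSubgroup_iff _).1 hn⟩

theorem QuasiPrimitivelyOn.pastFixingTransitiveOut (hconn : DConnected E) (hφ : IsHomToZ E φ)
    {v : V} (hqp : QuasiPrimitivelyOn E v (outSet E v)) {c : Perm V} (hc : c ∈ autGroup E)
    (hcv : c v = v) (hcS : ∀ w, φ w ≤ φ v → c w = w) {z : V} (hz : E v z) (hcz : c z ≠ z) :
    PastFixingTransitiveOut E φ v := fun _ _ hx hy =>
  hqp.exists_fixing_apply_eq (S := {w | φ w ≤ φ v})
    (fun b hb hbv w hw => by simpa [hbv] using (level_le_iff hconn hφ hb w v).2 hw)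
    hc hcv hcS hz hcz hx hy

theorem QuasiPrimitivelyOn.pastFixingTransitiveOut_flip (hconn : DConnected E)
    (hφ : IsHomToZ E φ) {v : V} (hqp : QuasiPrimitivelyOn E v (inSet E v)) {c : Perm V}
    (hc : c ∈ autGroup (flip E)) (hcv : c v = v) (hcS : ∀ w, (-φ) w ≤ (-φ) v → c w = w)
    {z : V} (hz : flip E v z) (hcz : c z ≠ z) : PastFixingTransitiveOut (flip E) (-φ) v := by
  intro x y hx hy
  obtain ⟨a, ha, hxy, hfix⟩ := hqp.exists_fixing_apply_eq (S := {w | φ v ≤ φ w})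
    (fun b hb hbv w hw => by simpa [hbv] using (level_le_iff hconn hφ hb v w).2 hw)
    (autGroup_flip E ▸ hc) hcv (fun w hw => hcS w (neg_le_neg hw)) hz hcz hx hy
  exact ⟨a, (autGroup_flip E).symm ▸ ha, hxy, fun w hw => hfix w (neg_le_neg_iff.1 hw)⟩

theorem PastFixingTransitiveOut.of_vertexTransitive {v : V} (h : PastFixingTransitiveOut E φ v)
    (hconn : DConnected E) (hφ : IsHomToZ E φ) (hvt : VertexTransitive E) (u : V) :
    PastFixingTransitiveOut E φ u := by
  obtain ⟨ρ, hρ, rfl⟩ := hvt v u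
  intro x y hx hy
  obtain ⟨a, ha, hxy, hfix⟩ :=
    h (ρ⁻¹ x) (ρ⁻¹ y) ((hρ _ _).2 (by simpa using hx)) ((hρ _ _).2 (by simpa using hy))
  refine ⟨ρ * a * ρ⁻¹, mul_mem (mul_mem hρ ha) (inv_mem hρ),
    by simpa using congrArg ρ hxy, fun w hw => ?_⟩
  have hw' : φ (ρ⁻¹ w) ≤ φ v := by
    simpa using (level_le_iff hconn hφ (inv_mem hρ) w (ρ v)).2 hw
  simpa using congrArg ρ (hfix _ hw')

theorem exists_stabilizer_fixing_past_moving_out (hconn : DConnected E) (hvt : VertexTransitive E)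
    (hφ : IsHomToZ E φ) (harc : ∃ u v, E u v) {h : Perm V} (hh : h ∈ autGroup E) {z : V}
    (hz : h z ≠ z) (hzmin : ∀ w, φ w < φ z → h w = w) (v : V) :
    ∃ c ∈ autGroup E, c v = v ∧ (∀ w, φ w ≤ φ v → c w = w) ∧ ∃ y, E v y ∧ c y ≠ y := by
  obtain ⟨_, _, harc⟩ := harc
  obtain ⟨u, hu⟩ := hvt.exists_adj_left harc z
  obtain ⟨σ, hσ, rfl⟩ := hvt v u
  have hσv : φ (σ v) < φ z := by have := hφ _ _ hu; omega
  refine ⟨σ⁻¹ * h * σ, mul_mem (mul_mem (inv_mem hσ) hh) hσ, by simp [hzmin _ hσv],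
    fun w hw => ?_, σ⁻¹ z, (hσ _ _).2 (by simpa using hu), by simpa using hz⟩
  have hσw : φ (σ w) < φ z := ((level_le_iff hconn hφ hσ w v).2 hw).trans_lt hσv
  simp [hzmin _ hσw]

theorem IsKArc.level (hφ : IsHomToZ E φ) {k : ℕ} {f : Fin (k + 1) → V} (hf : IsKArc E k f)
    (i : Fin (k + 1)) : φ (f i) = φ (f 0) + i := by
  induction i using Fin.induction with
  | zero => simp
  | succ i ih =>
    rw [hφ _ _ (hf i), ih]
    simp only [Fin.val_castSucc, Fin.val_succ, Nat.cast_add, Nat.cast_one]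
    ring

theorem IsKArc.init {k : ℕ} {f : Fin (k + 2) → V} (hf : IsKArc E (k + 1) f) :
    IsKArc E k (Fin.init f) := fun i => by
  simpa only [Fin.init, Fin.succ_castSucc] using hf i.castSucc

theorem highlyArcTransitive_of_forall_pastFixingTransitiveOut (hvt : VertexTransitive E)
    (hφ : IsHomToZ E φ) (h : ∀ u, PastFixingTransitiveOut E φ u) : HighlyArcTransitive E := by
  intro k
  induction k with
  | zero =>
    intro f g _ _
    obtain ⟨a, ha, hfg⟩ := hvt (f 0) (g 0)
    exact ⟨a, ha, fun i => by rwa [Fin.fin_one_eq_zero i]⟩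
  | succ k ih =>
    intro f g hf hg
    obtain ⟨b, hb, hbfg⟩ := ih _ _ hf.init hg.init
    have hlast : b (f (Fin.last k).castSucc) = g (Fin.last k).castSucc := hbfg (Fin.last k)
    obtain ⟨a, ha, hay, hfix⟩ := h (g (Fin.last k).castSucc) (b (f (Fin.last k).succ))
      (g (Fin.last k).succ) (hlast ▸ (hb _ _).1 (hf (Fin.last k))) (hg (Fin.last k))
    refine ⟨a * b, mul_mem ha hb, Fin.lastCases ?_ fun i => ?_⟩
    · simpa using hay
    · rw [Perm.mul_apply, show b (f i.castSucc) = g i.castSucc from hbfg i]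
      refine hfix _ ?_
      rw [hg.level hφ i.castSucc, hg.level hφ (Fin.last k).castSucc]
      simpa using i.is_le

-- `hloc` is what quasi-primitivity of `G_v` on `out(v)` provides, phrased so that it survives
-- reversing the arcs.
theorem highlyArcTransitive_of_nontrivial_fixing_nonpos (hconn : DConnected E)
    (hvt : VertexTransitive E) (hφ : IsHomToZ E φ) (harc : ∃ u v, E u v) {v : V}
    (hloc : ∀ c ∈ autGroup E, c v = v → (∀ w, φ w ≤ φ v → c w = w) →
      ∀ z, E v z → c z ≠ z → PastFixingTransitiveOut E φ v)
    {h : Perm V} (hh : h ∈ autGroup E) (hfix : ∀ w, φ w ≤ 0 → h w = w) (hne : h ≠ 1) :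
    HighlyArcTransitive E := by
  obtain ⟨z, hz, hzmin⟩ := exists_minimal_moved hfix hne
  obtain ⟨c, hc, hcv, hcS, y, hy, hcy⟩ :=
    exists_stabilizer_fixing_past_moving_out hconn hvt hφ harc hh hz hzmin v
  exact highlyArcTransitive_of_forall_pastFixingTransitiveOut hvt hφ
    ((hloc c hc hcv hcS y hy hcy).of_vertexTransitive hconn hφ hvt)

end

/-- Let `Γ` be a connected vertex-transitive digraph with Property Z such
that for some vertex `v` the stabilizer `G_v` acts quasi-primitively on both `in(v)` and
`out(v)`. If the pointwise stabilizer of the fibre `Γ₀` is non-trivial, then `Γ` is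
highly-arc-transitive. -/
theorem highly_arc_transitive_of_quasiPrimitive
    {V : Type*} (E : V → V → Prop)
    (hconn : DConnected E) (hvt : VertexTransitive E)
    (φ : V → ℤ) (hsurj : Function.Surjective φ)
    (hhom : ∀ u v : V, E u v → φ v = φ u + 1)
    (hqp : ∃ v : V, QuasiPrimitivelyOn E v (inSet E v) ∧ QuasiPrimitivelyOn E v (outSet E v))
    (hnt : ∃ g : Equiv.Perm V, g ∈ autGroup E ∧ (∀ x : V, φ x = 0 → g x = x) ∧ g ≠ 1) :
    HighlyArcTransitive E := by
  obtain ⟨v, hqp_in, hqp_out⟩ := hqp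
  obtain ⟨g, hg, hgfix, hgne⟩ := hnt
  obtain ⟨x, hx⟩ := hsurj 0
  obtain ⟨y, hy⟩ := hsurj 1
  obtain ⟨a, b, hab⟩ := hconn.exists_adj (x := x) (y := y) (by rintro rfl; omega)
  rcases exists_nontrivial_fixing_nonpos_or_nonneg hconn hsurj hhom hg hgfix hgne with
    ⟨h, hh, hfix, hne⟩ | ⟨h, hh, hfix, hne⟩
  · exact highlyArcTransitive_of_nontrivial_fixing_nonpos hconn hvt hhom ⟨a, b, hab⟩
      (fun c hc hcv hcS z hz hcz =>
        hqp_out.pastFixingTransitiveOut hconn hhom hc hcv hcS hz hcz)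
      hh hfix hne
  · exact .of_flip (highlyArcTransitive_of_nontrivial_fixing_nonpos hconn.flip hvt.flip
      (IsHomToZ.flip hhom) ⟨b, a, hab⟩
      (fun c hc hcv hcS z hz hcz =>
        hqp_in.pastFixingTransitiveOut_flip hconn hhom hc hcv hcS hz hcz)
      ((autGroup_flip E).symm ▸ hh) (fun w hw => hfix w (by simpa using hw)) hne)
end

section
/- Let Γ be a connected vertex-transitive digraph with in- and out-valencies both equal to 2. If Γ is not highly-arc-transitive, then there is a number k such that Aut(Γ) acts regularly on the k-arcs of Γ and |G_v| = 2^k for every vertex v. In particular, if vertex stabilizers in Aut(Γ) are infinite, then Γ is highly-arc-transitive. -/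
variable {V : Type*}

/-!
Let `k` be the largest number such that `Γ` is `k`-arc-transitive, and let `a` be an
automorphism fixing a `k`-arc `f` pointwise. If `a` moved an out-neighbour `x` of the last
vertex of `f`, then `x` and `a x` would be the two out-neighbours, so every `(k+1)`-arc could be
moved onto `f` followed by `x`, and `Γ` would be `(k+1)`-arc-transitive. Hence `a` fixes the
out-neighbours of the last vertex and, reversing all arcs, the in-neighbours of the first one.
Sliding `f` along `Γ` and using connectedness, `a` is the identity. So `Aut(Γ)` acts regularly
on `k`-arcs, and `G_v` is in bijection with the `2^k` arcs of length `k` starting at `v`.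
-/

theorem Nat.exists_and_not_succ_of_not_forall {P : ℕ → Prop} (h0 : P 0) (h : ¬ ∀ n, P n) :
    ∃ n, P n ∧ ¬ P (n + 1) := by
  by_contra! hsucc
  exact h fun n => Nat.rec h0 hsucc n

theorem Set.eq_or_eq_of_ncard_eq_two {α : Type*} {s : Set α} (hs : s.ncard = 2) {x y z : α}
    (hx : x ∈ s) (hy : y ∈ s) (hxy : x ≠ y) (hz : z ∈ s) : z = x ∨ z = y := by
  obtain ⟨p, q, -, rfl⟩ := Set.ncard_eq_two.1 hs
  simp only [Set.mem_insert_iff, Set.mem_singleton_iff] at hx hy hz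
  grind

namespace ValencyTwo

variable {E : V → V → Prop} {k : ℕ}

theorem mem_autGroup_flip {a : Equiv.Perm V} : a ∈ autGroup (flip E) ↔ a ∈ autGroup E :=
  forall_comm

theorem isKArc_snoc_iff {f : Fin (k + 1) → V} {x : V} :
    IsKArc E (k + 1) (Fin.snoc f x) ↔ IsKArc E k f ∧ E (f (Fin.last k)) x := by
  simp [IsKArc, Fin.forall_fin_succ', ← Fin.castSucc_succ]

theorem isKArc_cons_iff {f : Fin (k + 1) → V} {x : V} :
    IsKArc E (k + 1) (Fin.cons x f) ↔ E x (f 0) ∧ IsKArc E k f := by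
  simp [IsKArc, Fin.forall_fin_succ]

theorem IsKArc.tail {F : Fin (k + 2) → V} (hF : IsKArc E (k + 1) F) :
    IsKArc E k (Fin.tail F) := by
  rw [← Fin.cons_self_tail F, isKArc_cons_iff] at hF
  exact hF.2

theorem isKArc_comp_rev_iff {f : Fin (k + 1) → V} :
    IsKArc E k (f ∘ Fin.rev) ↔ IsKArc (flip E) k f := by
  simp only [IsKArc, Function.comp_apply, Fin.rev_succ, Fin.rev_castSucc, flip]
  exact (Fin.rev_surjective.forall (p := fun i => E (f i.succ) (f i.castSucc))).symm

theorem KArcTransitive.flip (h : KArcTransitive E k) : KArcTransitive (flip E) k := by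
  intro f g hf hg
  obtain ⟨a, ha, hfg⟩ := h _ _ (isKArc_comp_rev_iff.2 hf) (isKArc_comp_rev_iff.2 hg)
  exact ⟨a, mem_autGroup_flip.2 ha, fun i => by simpa using hfg i.rev⟩

theorem kArcTransitive_flip_iff : KArcTransitive (flip E) k ↔ KArcTransitive E k :=
  ⟨KArcTransitive.flip, KArcTransitive.flip⟩

theorem kArcTransitive_of_forall_exists_map (f₀ : Fin (k + 1) → V)
    (h : ∀ f, IsKArc E k f → ∃ a ∈ autGroup E, ∀ i, a (f i) = f₀ i) : KArcTransitive E k := by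
  intro f g hf hg
  obtain ⟨a, ha, haf⟩ := h f hf
  obtain ⟨b, hb, hbg⟩ := h g hg
  refine ⟨b⁻¹ * a, mul_mem (inv_mem hb) ha, fun i => ?_⟩
  rw [Equiv.Perm.mul_apply, haf, Equiv.Perm.inv_eq_iff_eq, hbg]

theorem kArcTransitive_zero (hvt : VertexTransitive E) : KArcTransitive E 0 := by
  intro f g _ _
  obtain ⟨a, ha, hfg⟩ := hvt (f 0) (g 0)
  exact ⟨a, ha, fun i => by rwa [Fin.fin_one_eq_zero i]⟩

theorem IsKArc.comp {a : Equiv.Perm V} (ha : a ∈ autGroup E) {f : Fin (k + 1) → V}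
    (hf : IsKArc E k f) : IsKArc E k (⇑a ∘ f) :=
  fun i => (ha _ _).1 (hf i)

structure TwoValentMaxArcTransitive (E : V → V → Prop) (k : ℕ) : Prop where
  ncard_outSet : ∀ v, (outSet E v).ncard = 2
  ncard_inSet : ∀ v, (inSet E v).ncard = 2
  kArcTransitive : KArcTransitive E k
  not_kArcTransitive_succ : ¬ KArcTransitive E (k + 1)

namespace TwoValentMaxArcTransitive

theorem flip (hE : TwoValentMaxArcTransitive E k) : TwoValentMaxArcTransitive (flip E) k :=
  ⟨hE.ncard_inSet, hE.ncard_outSet, KArcTransitive.flip hE.kArcTransitive,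
    mt kArcTransitive_flip_iff.1 hE.not_kArcTransitive_succ⟩

theorem exists_adj (hE : TwoValentMaxArcTransitive E k) (v : V) : ∃ x, E v x :=
  Set.nonempty_of_ncard_ne_zero (s := outSet E v) (by rw [hE.ncard_outSet]; norm_num)

end TwoValentMaxArcTransitive

section Rigidity

variable {a : Equiv.Perm V}

def IsFixedKArc (E : V → V → Prop) (k : ℕ) (a : Equiv.Perm V) (f : Fin (k + 1) → V) : Prop :=
  IsKArc E k f ∧ ⇑a ∘ f = f

theorem IsFixedKArc.apply_eq {f : Fin (k + 1) → V} (hf : IsFixedKArc E k a f) (i : Fin (k + 1)) :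
    a (f i) = f i :=
  congrFun hf.2 i

theorem IsFixedKArc.comp_rev {f : Fin (k + 1) → V} (hf : IsFixedKArc E k a f) :
    IsFixedKArc (flip E) k a (f ∘ Fin.rev) :=
  ⟨(isKArc_comp_rev_iff (E := flip E)).2 hf.1, by rw [← Function.comp_assoc, hf.2]⟩

theorem IsFixedKArc.apply_eq_of_adj (hE : TwoValentMaxArcTransitive E k) (ha : a ∈ autGroup E)
    {f : Fin (k + 1) → V} (hf : IsFixedKArc E k a f) {x : V} (hx : E (f (Fin.last k)) x) :
    a x = x := by
  by_contra hax
  have hax' : E (f (Fin.last k)) (a x) := by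
    simpa [hf.apply_eq] using (ha _ _).1 hx
  refine hE.not_kArcTransitive_succ <|
    kArcTransitive_of_forall_exists_map (Fin.snoc f x) fun F hF => ?_
  rw [← Fin.snoc_init_self F, isKArc_snoc_iff] at hF
  obtain ⟨b, hb, hbF⟩ := hE.kArcTransitive _ _ hF.1 hf.1
  have hbx : E (f (Fin.last k)) (b (F (Fin.last (k + 1)))) := by
    simpa [hbF] using (hb _ _).1 hF.2
  rcases Set.eq_or_eq_of_ncard_eq_two (hE.ncard_outSet _) hx hax' (Ne.symm hax) hbx with h | h
  · exact ⟨b, hb, Fin.lastCases (by simpa using h) fun i => by simpa [Fin.init] using hbF i⟩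
  · refine ⟨a⁻¹ * b, mul_mem (inv_mem ha) hb, Fin.lastCases ?_ fun i => ?_⟩
    · simp [Equiv.Perm.mul_apply, h]
    · rw [Equiv.Perm.mul_apply, Equiv.Perm.inv_eq_iff_eq, Fin.snoc_castSucc, hf.apply_eq]
      exact hbF i

theorem IsFixedKArc.tail_snoc (hE : TwoValentMaxArcTransitive E k) (ha : a ∈ autGroup E)
    {f : Fin (k + 1) → V} (hf : IsFixedKArc E k a f) {x : V} (hx : E (f (Fin.last k)) x) :
    IsFixedKArc E k a (Fin.tail (Fin.snoc f x : Fin (k + 2) → V)) :=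
  ⟨IsKArc.tail (isKArc_snoc_iff.2 ⟨hf.1, hx⟩), by
    rw [Fin.comp_tail, Fin.comp_snoc, hf.2, hf.apply_eq_of_adj hE ha hx]⟩

theorem IsFixedKArc.exists_head_eq (hE : TwoValentMaxArcTransitive E k) (ha : a ∈ autGroup E)
    {f : Fin (k + 1) → V} (hf : IsFixedKArc E k a f) (i : Fin (k + 1)) :
    ∃ g, IsFixedKArc E k a g ∧ g 0 = f i := by
  induction i using Fin.induction generalizing f with
  | zero => exact ⟨f, hf, rfl⟩
  | succ i ih =>
    obtain ⟨x, hx⟩ := hE.exists_adj (f (Fin.last k))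
    obtain ⟨g, hg, hg0⟩ := ih (hf.tail_snoc hE ha hx)
    exact ⟨g, hg, by simp [hg0, Fin.tail, ← Fin.castSucc_succ]⟩

theorem IsFixedKArc.exists_last_eq (hE : TwoValentMaxArcTransitive E k) (ha : a ∈ autGroup E)
    {f : Fin (k + 1) → V} (hf : IsFixedKArc E k a f) (i : Fin (k + 1)) :
    ∃ g, IsFixedKArc E k a g ∧ g (Fin.last k) = f i := by
  obtain ⟨g, hg, hg0⟩ := hf.comp_rev.exists_head_eq hE.flip (mem_autGroup_flip.2 ha) i.rev
  exact ⟨g ∘ Fin.rev, hg.comp_rev, by simpa using hg0⟩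

theorem IsFixedKArc.exists_last_eq_of_adj (hE : TwoValentMaxArcTransitive E k)
    (ha : a ∈ autGroup E) {f : Fin (k + 1) → V} (hf : IsFixedKArc E k a f) {i : Fin (k + 1)}
    {w : V} (hw : E (f i) w) : ∃ g, IsFixedKArc E k a g ∧ g (Fin.last k) = w := by
  obtain ⟨g, hg, hgi⟩ := hf.exists_last_eq hE ha i
  exact ⟨_, hg.tail_snoc hE ha (hgi ▸ hw), by simp [Fin.tail]⟩

theorem IsFixedKArc.exists_head_eq_of_adj (hE : TwoValentMaxArcTransitive E k)
    (ha : a ∈ autGroup E) {f : Fin (k + 1) → V} (hf : IsFixedKArc E k a f) {i : Fin (k + 1)}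
    {w : V} (hw : E w (f i)) : ∃ g, IsFixedKArc E k a g ∧ g 0 = w := by
  obtain ⟨g, hg, hgw⟩ := hf.comp_rev.exists_last_eq_of_adj hE.flip (mem_autGroup_flip.2 ha)
    (i := i.rev) (w := w) (by simpa [flip] using hw)
  exact ⟨g ∘ Fin.rev, hg.comp_rev, by simpa using hgw⟩

theorem IsFixedKArc.eq_one (hconn : DConnected E) (hE : TwoValentMaxArcTransitive E k)
    (ha : a ∈ autGroup E) {f : Fin (k + 1) → V} (hf : IsFixedKArc E k a f) : a = 1 := by
  have hcover : ∀ v, ∃ g i, IsFixedKArc E k a g ∧ g i = v := by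
    intro v
    induction hconn (f 0) v with
    | refl => exact ⟨f, 0, hf, rfl⟩
    | tail _ hvw ih =>
      obtain ⟨g, i, hg, rfl⟩ := ih
      rcases hvw with hvw | hwv
      · obtain ⟨g', hg', hg'w⟩ := hg.exists_last_eq_of_adj hE ha hvw
        exact ⟨g', _, hg', hg'w⟩
      · obtain ⟨g', hg', hg'w⟩ := hg.exists_head_eq_of_adj hE ha hwv
        exact ⟨g', _, hg', hg'w⟩
  ext v
  obtain ⟨g, i, hg, rfl⟩ := hcover v
  exact hg.apply_eq i

end Rigidity

namespace TwoValentMaxArcTransitive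

theorem eq_of_comp_eq (hconn : DConnected E) (hE : TwoValentMaxArcTransitive E k)
    {a b : Equiv.Perm V} (ha : a ∈ autGroup E) (hb : b ∈ autGroup E) {f : Fin (k + 1) → V}
    (hf : IsKArc E k f) (h : ⇑a ∘ f = ⇑b ∘ f) : a = b := by
  have hfix : IsFixedKArc E k (b⁻¹ * a) f :=
    ⟨hf, funext fun i => by simp [show a (f i) = b (f i) from congrFun h i]⟩
  exact (inv_mul_eq_one.1 (hfix.eq_one hconn hE (mul_mem (inv_mem hb) ha))).symm

theorem existsUnique_map (hconn : DConnected E) (hE : TwoValentMaxArcTransitive E k)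
    {f g : Fin (k + 1) → V} (hf : IsKArc E k f) (hg : IsKArc E k g) :
    ∃! a : autGroup E, ∀ i, (a : Equiv.Perm V) (f i) = g i := by
  obtain ⟨a, ha, hfg⟩ := hE.kArcTransitive f g hf hg
  exact ⟨⟨a, ha⟩, hfg, fun b hb => Subtype.ext <|
    hE.eq_of_comp_eq hconn b.2 ha hf (funext fun i => (hb i).trans (hfg i).symm)⟩

end TwoValentMaxArcTransitive

def kArcsFrom (E : V → V → Prop) (k : ℕ) (v : V) : Set (Fin (k + 1) → V) :=
  {f | IsKArc E k f ∧ f 0 = v}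

def kArcsFromSuccEquiv (E : V → V → Prop) (k : ℕ) (v : V) :
    kArcsFrom E (k + 1) v ≃ Σ w : outSet E v, kArcsFrom E k w where
  toFun F := ⟨⟨F.1 1, (by simpa [F.2.2] using F.2.1 0 : E v (F.1 1))⟩,
    ⟨Fin.tail F.1, IsKArc.tail F.2.1, rfl⟩⟩
  invFun p := ⟨Fin.cons v p.2.1, isKArc_cons_iff.2 ⟨by rw [p.2.2.2]; exact p.1.2, p.2.2.1⟩, rfl⟩
  left_inv := by
    rintro ⟨F, hF, rfl⟩
    exact Subtype.ext (Fin.cons_self_tail F)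
  right_inv p := Sigma.subtype_ext (Subtype.ext (by simpa using p.2.2.2)) rfl

theorem card_kArcsFrom (hout : ∀ v, (outSet E v).ncard = 2) :
    ∀ k (v : V), Nat.card (kArcsFrom E k v) = 2 ^ k
  | 0, v => by
    have hsingleton : kArcsFrom E 0 v = {fun _ => v} := by
      ext f
      simp [kArcsFrom, IsKArc, funext_iff, Fin.forall_fin_one]
    rw [hsingleton, Nat.card_unique, pow_zero]
  | k + 1, v => by
    have hfin : ∀ w : outSet E v, Finite (kArcsFrom E k w) := fun w =>
      Nat.finite_of_card_ne_zero (by simp [card_kArcsFrom hout k])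
    have : Fintype (outSet E v) :=
      (Set.finite_of_ncard_ne_zero (by rw [hout]; norm_num)).fintype
    rw [Nat.card_congr (kArcsFromSuccEquiv E k v), Nat.card_sigma]
    simp [card_kArcsFrom hout k, ← Nat.card_eq_fintype_card, hout, pow_succ, mul_comm]

theorem TwoValentMaxArcTransitive.card_vStab (hconn : DConnected E)
    (hE : TwoValentMaxArcTransitive E k) (v : V) : Nat.card (vStab E v) = 2 ^ k := by
  rw [← card_kArcsFrom hE.ncard_outSet k v]
  obtain ⟨f, hf, rfl⟩ : Nonempty (kArcsFrom E k v) :=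
    Nat.card_pos_iff.1 (by rw [card_kArcsFrom hE.ncard_outSet]; positivity) |>.1
  refine Nat.card_eq_of_bijective (fun g => ⟨⇑g.1.1 ∘ f, IsKArc.comp g.1.2 hf, g.2⟩)
    ⟨fun g₁ g₂ h => ?_, fun F => ?_⟩
  · exact Subtype.ext <| Subtype.ext <|
      hE.eq_of_comp_eq hconn g₁.1.2 g₂.1.2 hf (congrArg Subtype.val h)
  · obtain ⟨F, hF, hF0⟩ := F
    obtain ⟨b, hb, hbF⟩ := hE.kArcTransitive f F hf hF
    exact ⟨⟨⟨b, hb⟩, (hbF 0).trans hF0⟩, Subtype.ext (funext hbF)⟩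

theorem exists_regular_on_kArcs_of_not_highlyArcTransitive (hconn : DConnected E)
    (hvt : VertexTransitive E) (hout : ∀ v, (outSet E v).ncard = 2)
    (hin : ∀ v, (inSet E v).ncard = 2) (hnot : ¬ HighlyArcTransitive E) :
    ∃ k : ℕ, (∀ f g : Fin (k + 1) → V, IsKArc E k f → IsKArc E k g →
        ∃! a : autGroup E, ∀ i, (a : Equiv.Perm V) (f i) = g i) ∧
      ∀ v, Nat.card (vStab E v) = 2 ^ k := by
  obtain ⟨k, hk, hk1⟩ := Nat.exists_and_not_succ_of_not_forall (kArcTransitive_zero hvt) hnot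
  have hE : TwoValentMaxArcTransitive E k := ⟨hout, hin, hk, hk1⟩
  exact ⟨k, fun f g hf hg => hE.existsUnique_map hconn hf hg, hE.card_vStab hconn⟩

end ValencyTwo

/-- Let `Γ` be a connected vertex-transitive digraph with in- and
out-valencies equal to `2`.  If `Γ` is not highly-arc-transitive then there is a `k` such
that `Aut(Γ)` acts regularly on `k`-arcs and every vertex stabilizer has order `2^k`.
In particular, if vertex stabilizers are infinite then `Γ` is highly-arc-transitive. -/
theorem valency_two_regular_or_highly_arc_transitive
    {V : Type*} (E : V → V → Prop)
    (hconn : DConnected E) (hvt : VertexTransitive E)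
    (hout : ∀ v : V, (outSet E v).ncard = 2)
    (hin : ∀ v : V, (inSet E v).ncard = 2) :
    (¬ HighlyArcTransitive E →
      ∃ k : ℕ, (∀ f g : Fin (k + 1) → V, IsKArc E k f → IsKArc E k g →
          ∃! a : ↥(autGroup E), ∀ i, (a : Equiv.Perm V) (f i) = g i) ∧
        ∀ v : V, Nat.card ↥(vStab E v) = 2 ^ k) ∧
    ((∃ v : V, Infinite ↥(vStab E v)) → HighlyArcTransitive E) := by
  have hregular := ValencyTwo.exists_regular_on_kArcs_of_not_highlyArcTransitive hconn hvt hout hin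
  refine ⟨hregular, fun ⟨v, hv⟩ => by_contra fun hnot => ?_⟩
  obtain ⟨k, -, hcard⟩ := hregular hnot
  exact pow_ne_zero k two_ne_zero ((hcard v).symm.trans Nat.card_eq_zero_of_infinite)
end

section
/- Let Γ be a vertex- and arc-transitive two-ended digraph with fibres Γ_i coming from a surjective graph homomorphism onto Z, in the case (i) of the two-ended structure theorem (Γ/N ≅ Z as an undirected-line digraph). Then every vertex v ∈ Γ_i has both in- and out-neighbours in Γ_{i-1} and in Γ_{i+1}, the number of out-neighbours of v in Γ_{i-1} equals the number in Γ_{i+1}, and similarly for in-neighbours. -/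
/-!
Every automorphism preserves the partition into levels `Γ_i` and maps adjacent levels to adjacent
levels, so it acts on `ℤ` as an isometry `i ↦ ±i + c`. An automorphism fixing `v` that reflects
the levels about `φ v` exchanges the out-neighbours (and the in-neighbours) of `v` one level up with
those one level down, and by conjugation a reflection at one vertex gives one at every vertex.
If some vertex has two out-neighbours (or two in-neighbours) on different levels, arc-transitivity
provides it. Otherwise every vertex `w` sends all its out-arcs in one direction `o w = ±1` and
receives all its in-arcs from one direction `ι w = ±1`; the product `k = o w * ι w` is invariant
under automorphisms, hence constant, and `(1 + k) φ + o` is constant along arcs. By connectivity it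
is constant on `Γ`, which contradicts the surjectivity of `φ` when `k = 1`, and the existence of
both upward and downward arcs when `k = -1`.
-/

variable {V : Type*}

open Function

theorem Int.exists_eq_mul_add_of_injective_of_step {f : ℤ → ℤ} (hf : Injective f)
    (hstep : ∀ i, f (i + 1) = f i + 1 ∨ f (i + 1) = f i - 1) :
    ∃ e : ℤ, (e = 1 ∨ e = -1) ∧ ∀ i, f i = e * i + f 0 := by
  set e := f 1 - f 0
  -- a step back would make `f` take the same value twice
  have hdiff : Periodic (fun i => f (i + 1) - f i) 1 := by
    intro i
    have hne : f (i + 1 + 1) ≠ f i := hf.ne (by omega)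
    have := hstep i
    have := hstep (i + 1)
    dsimp only
    omega
  have hlin : Periodic (fun i => f i - e * i) 1 := by
    intro i
    have := hdiff.int_mul_eq i
    simp only [Int.cast_id, mul_one, zero_add] at this
    dsimp only
    linarith
  refine ⟨e, by have := hstep 0; simp only [zero_add] at this; omega, fun i => ?_⟩
  have := hlin.int_mul_eq i
  simp only [Int.cast_id, mul_one, mul_zero, sub_zero] at this
  linarith

section Levels

variable {E : V → V → Prop} {φ : V → ℤ}

lemma mem_autGroup_iff {g : Equiv.Perm V} :
    g ∈ autGroup E ↔ ∀ u v, E u v ↔ E (g u) (g v) :=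
  Iff.rfl

lemma DConnected.apply_eq_of_forall_arc {α : Type*} (hconn : DConnected E) {f : V → α}
    (hf : ∀ x y, E x y → f x = f y) (u v : V) : f u = f v := by
  induction hconn u v with
  | refl => rfl
  | tail _ hab ih => exact ih.trans (hab.elim (hf _ _) fun h => (hf _ _ h).symm)

lemma VertexTransitive.exists_arc_from (hvt : VertexTransitive E) {a b : V} (hab : E a b)
    (v : V) : ∃ u, E v u := by
  obtain ⟨g, hg, rfl⟩ := hvt a v
  exact ⟨g b, (mem_autGroup_iff.1 hg a b).1 hab⟩

lemma VertexTransitive.exists_arc_to (hvt : VertexTransitive E) {a b : V} (hab : E a b)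
    (v : V) : ∃ u, E u v := by
  obtain ⟨g, hg, rfl⟩ := hvt b v
  exact ⟨g a, (mem_autGroup_iff.1 hg a b).1 hab⟩

def AutActsIsometricallyOnLevels (E : V → V → Prop) (φ : V → ℤ) : Prop :=
  ∀ g ∈ autGroup E, ∃ e c : ℤ, (e = 1 ∨ e = -1) ∧ ∀ w, φ (g w) = e * φ w + c

lemma autActsIsometricallyOnLevels (hsurj : Surjective φ)
    (hhom : ∀ u v, E u v → φ v = φ u + 1 ∨ φ v = φ u - 1)
    (hcongr : ∀ g ∈ autGroup E, ∀ u v, φ u = φ v → φ (g u) = φ (g v))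
    (hup : ∀ i : ℤ, ∃ u v, φ u = i ∧ φ v = i + 1 ∧ E u v) :
    AutActsIsometricallyOnLevels E φ := by
  intro g hg
  obtain ⟨s, hs⟩ := hsurj.hasRightInverse
  set f : ℤ → ℤ := fun i => φ (g (s i))
  have hlevel : ∀ w, φ (g w) = f (φ w) := fun w => hcongr g hg _ _ (hs _).symm
  have hinj : Injective f := fun i j hij => by
    simpa [hs i, hs j] using hcongr g⁻¹ ((autGroup E).inv_mem hg) _ _ hij
  have hstep : ∀ i, f (i + 1) = f i + 1 ∨ f (i + 1) = f i - 1 := by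
    intro i
    obtain ⟨u, v, rfl, hv, huv⟩ := hup i
    rw [← hv, ← hlevel, ← hlevel]
    exact hhom _ _ ((mem_autGroup_iff.1 hg u v).1 huv)
  obtain ⟨e, he, hf⟩ := Int.exists_eq_mul_add_of_injective_of_step hinj hstep
  exact ⟨e, f 0, he, fun w => by rw [hlevel, hf]⟩

lemma eq_reflection_of_fixes_of_moves_level {g : Equiv.Perm V} {e c : ℤ} (he : e = 1 ∨ e = -1)
    (hg : ∀ w, φ (g w) = e * φ w + c) {v x : V} (hv : g v = v) (hx : φ (g x) ≠ φ x) (w : V) :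
    φ (g w) = 2 * φ v - φ w := by
  have hgv := hg v
  have hgx := hg x
  have hgw := hg w
  rw [hv] at hgv
  rcases he with rfl | rfl <;> omega

lemma exists_reflection_at_of_exists_reflection (hvt : VertexTransitive E)
    (haff : AutActsIsometricallyOnLevels E φ) {v₀ : V} {r₀ : Equiv.Perm V}
    (hr₀ : r₀ ∈ autGroup E) (hr₀v : r₀ v₀ = v₀) (hr₀φ : ∀ w, φ (r₀ w) = 2 * φ v₀ - φ w)
    (v : V) : ∃ r ∈ autGroup E, r v = v ∧ ∀ w, φ (r w) = 2 * φ v - φ w := by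
  obtain ⟨a, ha, rfl⟩ := hvt v₀ v
  obtain ⟨e, c, -, haφ⟩ := haff a ha
  refine ⟨a * r₀ * a⁻¹, mul_mem (mul_mem ha hr₀) (inv_mem ha), by simp [hr₀v], fun w => ?_⟩
  have hw : φ w = e * φ (a⁻¹ w) + c := by simpa using haφ (a⁻¹ w)
  simp only [Equiv.Perm.mul_apply]
  linear_combination haφ (r₀ (a⁻¹ w)) + e * hr₀φ (a⁻¹ w) - 2 * haφ v₀ + hw

lemma levelStep_apply {R : V → V → Prop} {o : V → ℤ} (ho : ∀ w u, R w u → φ u = φ w + o w)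
    {g : Equiv.Perm V} (hg : ∀ a b, R a b → R (g a) (g b)) {e c : ℤ}
    (hgφ : ∀ w, φ (g w) = e * φ w + c) {w u : V} (hu : R w u) : o (g w) = e * o w := by
  linear_combination -ho _ _ (hg _ _ hu) + hgφ u - hgφ w + e * ho w u hu

lemma false_of_levelSteps (hconn : DConnected E) (hvt : VertexTransitive E)
    (haff : AutActsIsometricallyOnLevels E φ) (hsurj : Surjective φ)
    (hup : ∃ a b, E a b ∧ φ b = φ a + 1) (hdown : ∃ a b, E a b ∧ φ b = φ a - 1)
    {o ι : V → ℤ} (ho : ∀ w u, E w u → φ u = φ w + o w) (hι : ∀ w u, E u w → φ u = φ w + ι w)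
    (ho₁ : ∀ w, o w = 1 ∨ o w = -1) (hι₁ : ∀ w, ι w = 1 ∨ ι w = -1)
    (hout : ∀ w, ∃ u, E w u) (hin : ∀ w, ∃ u, E u w) : False := by
  have hprod : ∀ w w', o w * ι w = o w' * ι w' := by
    intro w w'
    obtain ⟨g, hg, rfl⟩ := hvt w w'
    obtain ⟨e, c, he, hgφ⟩ := haff g hg
    obtain ⟨u, hu⟩ := hout w
    obtain ⟨u', hu'⟩ := hin w
    rw [levelStep_apply ho (fun a b => (mem_autGroup_iff.1 hg a b).1) hgφ hu,
      levelStep_apply (R := flip E) hι (fun a b => (mem_autGroup_iff.1 hg b a).1) hgφ hu']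
    rcases he with rfl | rfl <;> ring
  obtain ⟨v₀, -⟩ := hsurj 0
  obtain ⟨k, hk⟩ : ∃ k, ∀ w, o w * ι w = k := ⟨_, fun w => hprod w v₀⟩
  have hinv : ∀ x y, E x y → (1 + k) * φ x + o x = (1 + k) * φ y + o y := by
    intro x y hxy
    have hφy := ho x y hxy
    have hιy : ι y = -o x := by linarith [hι y x hxy]
    have hoy : o y = -k * o x := by
      have hky := hk y
      rcases hι₁ y with h | h <;> rw [h] at hky hιy
      · linear_combination hky + k * hιy
      · linear_combination -hky + k * hιy
    linear_combination (-1 - k) * hφy - hoy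
  have hconst := hconn.apply_eq_of_forall_arc hinv
  have hk₁ : k = 1 ∨ k = -1 := by
    rcases ho₁ v₀ with h | h <;> rcases hι₁ v₀ with h' | h' <;> simp [← hk v₀, h, h']
  rcases hk₁ with rfl | rfl
  · obtain ⟨a, ha⟩ := hsurj 0
    obtain ⟨b, hb⟩ := hsurj 2
    have hab := hconst a b
    rw [ha, hb] at hab
    rcases ho₁ a with h | h <;> rcases ho₁ b with h' | h' <;> linarith
  · obtain ⟨a, b, hab, hb⟩ := hup
    obtain ⟨c, d, hcd, hd⟩ := hdown
    have hoa := ho a b hab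
    have hoc := ho c d hcd
    have hac := hconst a c
    linarith

lemma exists_level_reflection (hconn : DConnected E) (hvt : VertexTransitive E)
    (hat : ArcTransitive E) (haff : AutActsIsometricallyOnLevels E φ) (hsurj : Surjective φ)
    (hhom : ∀ u v, E u v → φ v = φ u + 1 ∨ φ v = φ u - 1)
    (hup : ∃ a b, E a b ∧ φ b = φ a + 1) (hdown : ∃ a b, E a b ∧ φ b = φ a - 1) :
    ∃ v, ∃ r ∈ autGroup E, r v = v ∧ ∀ w, φ (r w) = 2 * φ v - φ w := by
  by_cases hout : ∃ v x y, E v x ∧ E v y ∧ φ x ≠ φ y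
  · obtain ⟨v, x, y, hx, hy, hxy⟩ := hout
    obtain ⟨r, hr, hrv, hrx⟩ := hat v x v y hx hy
    obtain ⟨e, c, he, hrφ⟩ := haff r hr
    exact ⟨v, r, hr, hrv, eq_reflection_of_fixes_of_moves_level he hrφ hrv (hrx ▸ hxy.symm)⟩
  by_cases hin : ∃ v x y, E x v ∧ E y v ∧ φ x ≠ φ y
  · obtain ⟨v, x, y, hx, hy, hxy⟩ := hin
    obtain ⟨r, hr, hrx, hrv⟩ := hat x v y v hx hy
    obtain ⟨e, c, he, hrφ⟩ := haff r hr
    exact ⟨v, r, hr, hrv, eq_reflection_of_fixes_of_moves_level he hrφ hrv (hrx ▸ hxy.symm)⟩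
  push Not at hout hin
  obtain ⟨a, b, hab, hb⟩ := hup
  choose nout hnout using hvt.exists_arc_from hab
  choose nin hnin using hvt.exists_arc_to hab
  refine (false_of_levelSteps hconn hvt haff hsurj ⟨a, b, hab, hb⟩ hdown (o := fun w => φ (nout w) - φ w)
    (ι := fun w => φ (nin w) - φ w) (fun w u hu => ?_) (fun w u hu => ?_) (fun w => ?_)
    (fun w => ?_) (fun w => ⟨_, hnout w⟩) (fun w => ⟨_, hnin w⟩)).elim
  · linarith [hout w u (nout w) hu (hnout w)]
  · linarith [hin w u (nin w) hu (hnin w)]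
  · have := hhom _ _ (hnout w)
    omega
  · have := hhom _ _ (hnin w)
    omega

lemma levels_balanced_of_reflection {R : V → V → Prop} {r : Equiv.Perm V} {v u : V}
    (hR : ∀ a b, R a b ↔ R (r a) (r b)) (hrv : r v = v) (hrφ : ∀ w, φ (r w) = 2 * φ v - φ w)
    (hadj : ∀ w, R v w → φ w = φ v + 1 ∨ φ w = φ v - 1) (hu : R v u) :
    (∃ w, R v w ∧ φ w = φ v - 1) ∧ (∃ w, R v w ∧ φ w = φ v + 1) ∧
      {w | R v w ∧ φ w = φ v - 1}.ncard = {w | R v w ∧ φ w = φ v + 1}.ncard := by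
  have himage : r '' {w | R v w ∧ φ w = φ v + 1} = {w | R v w ∧ φ w = φ v - 1} := by
    ext w
    constructor
    · rintro ⟨w, ⟨hw, hφw⟩, rfl⟩
      exact ⟨hrv ▸ (hR v w).1 hw, by rw [hrφ]; omega⟩
    · rintro ⟨hw, hφw⟩
      refine ⟨r⁻¹ w, ⟨?_, ?_⟩, r.apply_symm_apply w⟩
      · rw [hR, hrv]
        simpa using hw
      · have : φ w = 2 * φ v - φ (r⁻¹ w) := by simpa using hrφ (r⁻¹ w)
        omega
  have hup : {w | R v w ∧ φ w = φ v + 1}.Nonempty := by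
    rcases hadj u hu with h | h
    · exact ⟨u, hu, h⟩
    · exact Set.image_nonempty.1 (by rw [himage]; exact ⟨u, hu, h⟩)
  have hdown : {w | R v w ∧ φ w = φ v - 1}.Nonempty := himage ▸ hup.image r
  refine ⟨hdown, hup, ?_⟩
  rw [← himage, Set.ncard_image_of_injective _ r.injective]

end Levels

/-- In case (i) of the two-ended structure theorem (where `Γ/N ≅ ℤ` as an
undirected-line digraph, witnessed by a surjective homomorphism `φ` onto `ℤ` with arcs
changing the level by exactly `1` and arcs going in both directions between consecutive
levels), every vertex `v ∈ Γ_i` has in- and out-neighbours both in `Γ_{i-1}` and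
`Γ_{i+1}`, with as many out-neighbours in `Γ_{i-1}` as in `Γ_{i+1}`, and likewise for
in-neighbours. -/
theorem two_ended_case_line_neighbours
    {V : Type*} (E : V → V → Prop)
    (hvt : VertexTransitive E) (hat : ArcTransitive E) (h2 : TwoEnded E)
    (φ : V → ℤ) (hsurj : Function.Surjective φ)
    (hhom : ∀ u v : V, E u v → φ v = φ u + 1 ∨ φ v = φ u - 1)
    (hcongr : ∀ g : Equiv.Perm V, g ∈ autGroup E → ∀ u v : V, φ u = φ v → φ (g u) = φ (g v))
    (hcaseI : ∀ i : ℤ, (∃ u v : V, φ u = i ∧ φ v = i + 1 ∧ E u v) ∧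
      (∃ u v : V, φ u = i + 1 ∧ φ v = i ∧ E u v)) :
    ∀ v : V,
      (∃ u : V, E u v ∧ φ u = φ v - 1) ∧ (∃ u : V, E u v ∧ φ u = φ v + 1) ∧
      (∃ u : V, E v u ∧ φ u = φ v - 1) ∧ (∃ u : V, E v u ∧ φ u = φ v + 1) ∧
      {u : V | E v u ∧ φ u = φ v - 1}.ncard = {u : V | E v u ∧ φ u = φ v + 1}.ncard ∧
      {u : V | E u v ∧ φ u = φ v - 1}.ncard = {u : V | E u v ∧ φ u = φ v + 1}.ncard := by
  obtain ⟨⟨a, b, ha, hb, hab⟩, ⟨c, d, hc, hd, hcd⟩⟩ := hcaseI 0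
  have haff := autActsIsometricallyOnLevels hsurj hhom hcongr fun i => (hcaseI i).1
  obtain ⟨v₀, r₀, hr₀, hr₀v, hr₀φ⟩ := exists_level_reflection h2.1 hvt hat haff hsurj hhom
    ⟨a, b, hab, by omega⟩ ⟨c, d, hcd, by omega⟩
  intro v
  obtain ⟨r, hr, hrv, hrφ⟩ := exists_reflection_at_of_exists_reflection hvt haff hr₀ hr₀v hr₀φ v
  obtain ⟨x, hx⟩ := hvt.exists_arc_from hab v
  obtain ⟨y, hy⟩ := hvt.exists_arc_to hab v
  obtain ⟨hout_down, hout_up, hout_card⟩ :=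
    levels_balanced_of_reflection (mem_autGroup_iff.1 hr) hrv hrφ (hhom v) hx
  obtain ⟨hin_down, hin_up, hin_card⟩ :=
    levels_balanced_of_reflection (R := flip E) (fun a b => mem_autGroup_iff.1 hr b a) hrv hrφ
      (fun w hw => by have := hhom w v hw; omega) hy
  exact ⟨hin_down, hin_up, hout_down, hout_up, hout_card, hin_card⟩
end

section
/- Let Γ be a two-ended highly-arc-transitive digraph of prime out-valency p such that the fibres Γ_i (of the homomorphism to Z⃗) have more than 2 elements. Then every alternet of Γ is a complete bipartite digraph K⃗_{p,p}: for each arc (v,u), all p in-neighbours of u have the same out-neighbourhood, namely the set out(v) of size p, and these 2p vertices with all p² arcs between them form an alternet. -/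
variable {V : Type*}

universe u v

/-!
Double counting the arcs between consecutive fibres makes the in-valency `p` as well. The
stabiliser of a vertex `u` is transitive on its `p` in-neighbours and preserves the partition by
out-neighbourhood; as `p` is prime, the classes are singletons or all of `in(u)`, and dually for
out-neighbours and in-neighbourhoods. If either partition is not discrete, arc-transitivity
makes all in-neighbours of every vertex share one out-neighbourhood.

Otherwise out-neighbours of a common vertex are told apart by their in-neighbourhoods, and
in-neighbours of a common vertex by their out-neighbourhoods, so an automorphism is determined,
level by level, by its restriction to a single fibre. By connectedness the stabiliser of `v`
preserves fibres, hence is finite; but it is transitive on the at least `2 ^ K` `K`-arcs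
starting at `v`, for every `K`.

Finally, once `in(u)` shares the out-neighbourhood `out(v)`, the arcs from `in(u)` to `out(v)`
form a set closed under sharing a tail or a head.
-/

variable {E : V → V → Prop}

lemma mem_autGroup_flip {g : Equiv.Perm V} (hg : g ∈ autGroup E) : g ∈ autGroup (flip E) :=
  fun u v => hg v u

lemma outSet_apply_of_mem_autGroup {g : Equiv.Perm V} (hg : g ∈ autGroup E) (v : V) :
    outSet E (g v) = g '' outSet E v := by
  ext x
  rw [← g.apply_symm_apply x, Set.mem_image_equiv, Equiv.symm_apply_apply]
  exact (hg v (g.symm x)).symm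

lemma inSet_apply_of_mem_autGroup {g : Equiv.Perm V} (hg : g ∈ autGroup E) (v : V) :
    inSet E (g v) = g '' inSet E v :=
  outSet_apply_of_mem_autGroup (E := flip E) (mem_autGroup_flip hg) v

lemma ArcTransitive.flip (hat : ArcTransitive E) : ArcTransitive (flip E) := by
  intro u v x y huv hxy
  obtain ⟨g, hg, hgv, hgu⟩ := hat v u y x huv hxy
  exact ⟨g, mem_autGroup_flip hg, hgu, hgv⟩

lemma HighlyArcTransitive.vertexTransitive (hhat : HighlyArcTransitive E) :
    VertexTransitive E := by
  intro u v
  obtain ⟨g, hg, hgu⟩ := hhat 0 (fun _ => u) (fun _ => v) (fun i => i.elim0) (fun i => i.elim0)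
  exact ⟨g, hg, hgu 0⟩

lemma HighlyArcTransitive.arcTransitive (hhat : HighlyArcTransitive E) : ArcTransitive E := by
  intro u v x y huv hxy
  obtain ⟨g, hg, hg'⟩ := hhat 1 ![u, v] ![x, y]
    (fun i => by fin_cases i; simpa using huv) (fun i => by fin_cases i; simpa using hxy)
  exact ⟨g, hg, hg' 0, hg' 1⟩

lemma VertexTransitive.ncard_inSet_eq (hvt : VertexTransitive E) (u v : V) :
    (inSet E u).ncard = (inSet E v).ncard := by
  obtain ⟨g, hg, rfl⟩ := hvt u v
  rw [inSet_apply_of_mem_autGroup hg, Set.ncard_image_of_injective _ g.injective]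

lemma ncard_inSet_eq_of_ncard_outSet_eq {φ : V → ℤ} (hhom : ∀ u v, E u v → φ v = φ u + 1)
    {m : ℕ} (hm : 0 < m) (hfib : ∀ i, (φ ⁻¹' {i}).ncard = m) {p q : ℕ}
    (hout : ∀ v, (outSet E v).ncard = p) (hin : ∀ v, (inSet E v).ncard = q) : q = p := by
  classical
  have hfin : ∀ i, (φ ⁻¹' {i}).Finite := fun i => Set.finite_of_ncard_pos (by rw [hfib]; omega)
  have habove : ∀ a ∈ (hfin 0).toFinset, ((hfin 1).toFinset.bipartiteAbove E a).card = p := by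
    intro a ha
    rw [← hout a, ← Set.ncard_coe_finset, Finset.coe_bipartiteAbove]
    congr 1
    ext b
    simp only [Set.Finite.mem_toFinset, Set.mem_preimage, Set.mem_singleton_iff] at ha ⊢
    exact ⟨And.right, fun hab => ⟨by rw [hhom a b hab, ha]; rfl, hab⟩⟩
  have hbelow : ∀ b ∈ (hfin 1).toFinset, ((hfin 0).toFinset.bipartiteBelow E b).card = q := by
    intro b hb
    rw [← hin b, ← Set.ncard_coe_finset, Finset.coe_bipartiteBelow]
    congr 1
    ext a
    simp only [Set.Finite.mem_toFinset, Set.mem_preimage, Set.mem_singleton_iff] at hb ⊢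
    exact ⟨And.right, fun hab => ⟨by have := hhom a b hab; omega, hab⟩⟩
  have hcount := Finset.card_mul_eq_card_mul E habove hbelow
  rw [← Set.ncard_eq_toFinset_card _ (hfin 0), ← Set.ncard_eq_toFinset_card _ (hfin 1), hfib,
    hfib] at hcount
  exact (Nat.eq_of_mul_eq_mul_left hm hcount).symm

lemma Finset.eq_of_card_prime_of_card_fiber_eq {α β : Type*} [DecidableEq β] {f : α → β}
    {s : Finset α} (hp : s.card.Prime)
    (hfib : ∀ x ∈ s, ∀ y ∈ s, (s.filter (f · = f x)).card = (s.filter (f · = f y)).card)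
    {x₀ x₁ : α} (h₀ : x₀ ∈ s) (h₁ : x₁ ∈ s) (hne : x₀ ≠ x₁) (heq : f x₀ = f x₁) :
    ∀ y ∈ s, f y = f x₀ := by
  set c := (s.filter (f · = f x₀)).card
  have hsum : s.card = (s.image f).card * c := by
    rw [Finset.card_eq_sum_card_image f s]
    refine Finset.sum_const_nat fun b hb => ?_
    obtain ⟨y, hy, rfl⟩ := Finset.mem_image.mp hb
    exact hfib y hy x₀ h₀
  have hc : 1 < c := Finset.one_lt_card.mpr
    ⟨x₀, by simp [h₀], x₁, by simp [h₁, heq], hne⟩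
  have hcs : c = s.card := (hp.eq_one_or_self_of_dvd c (Dvd.intro_left _ hsum.symm)).resolve_left
    hc.ne'
  have hfilter : s.filter (f · = f x₀) = s :=
    Finset.eq_of_subset_of_card_le (Finset.filter_subset _ _) hcs.ge
  intro y hy
  rw [← hfilter] at hy
  exact (Finset.mem_filter.mp hy).2

lemma Set.eq_of_ncard_prime_of_ncard_fiber_eq {α β : Type*} {f : α → β} {Ω : Set α}
    (hp : Ω.ncard.Prime)
    (hfib : ∀ x ∈ Ω, ∀ y ∈ Ω, {z ∈ Ω | f z = f x}.ncard = {z ∈ Ω | f z = f y}.ncard)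
    {x₀ x₁ : α} (h₀ : x₀ ∈ Ω) (h₁ : x₁ ∈ Ω) (hne : x₀ ≠ x₁) (heq : f x₀ = f x₁) :
    ∀ y ∈ Ω, f y = f x₀ := by
  classical
  lift Ω to Finset α using Set.finite_of_ncard_pos hp.pos
  simp only [Finset.mem_coe, Set.ncard_coe_finset, ← Finset.coe_filter] at *
  exact Finset.eq_of_card_prime_of_card_fiber_eq hp hfib h₀ h₁ hne heq

lemma Set.eq_of_ncard_prime_of_transitive {α β : Type*} {f : α → β} {Ω : Set α}
    (hp : Ω.ncard.Prime)
    (htrans : ∀ x ∈ Ω, ∀ y ∈ Ω, ∃ g : α ≃ α, g x = y ∧ g '' Ω = Ω ∧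
      ∀ z w, f (g z) = f (g w) ↔ f z = f w)
    {x₀ x₁ : α} (h₀ : x₀ ∈ Ω) (h₁ : x₁ ∈ Ω) (hne : x₀ ≠ x₁) (heq : f x₀ = f x₁) :
    ∀ y ∈ Ω, f y = f x₀ := by
  refine Set.eq_of_ncard_prime_of_ncard_fiber_eq hp (fun x hx y hy => ?_) h₀ h₁ hne heq
  obtain ⟨g, rfl, hgΩ, hgf⟩ := htrans x hx y hy
  have hfib : {z ∈ Ω | f z = f (g x)} = g '' {z ∈ Ω | f z = f x} := by
    have hmem : ∀ z, g z ∈ Ω ↔ z ∈ Ω := fun z => by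
      conv_lhs => rw [← hgΩ]
      exact g.injective.mem_set_image
    ext z
    obtain ⟨z, rfl⟩ := g.surjective z
    simp only [g.injective.mem_set_image, Set.mem_sep_iff, hgf, hmem]
  rw [hfib, Set.ncard_image_of_injective _ g.injective]

lemma outSet_eq_of_not_injOn (hat : ArcTransitive E) {p : ℕ} (hp : p.Prime)
    (hin : ∀ u, (inSet E u).ncard = p) {u₀ : V} (h : ¬ Set.InjOn (outSet E) (inSet E u₀))
    {v u w : V} (hvu : E v u) (hwu : E w u) : outSet E w = outSet E v := by
  obtain ⟨x₀, hx₀, x₁, hx₁, heq, hne⟩ : ∃ x₀ ∈ inSet E u₀, ∃ x₁ ∈ inSet E u₀,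
      outSet E x₀ = outSet E x₁ ∧ x₀ ≠ x₁ := by
    simpa [Set.InjOn] using h
  have hconst : ∀ y ∈ inSet E u₀, outSet E y = outSet E x₀ := by
    refine Set.eq_of_ncard_prime_of_transitive (hin u₀ ▸ hp) (fun x hx y hy => ?_)
      hx₀ hx₁ hne heq
    obtain ⟨g, hg, hgx, hgu⟩ := hat x u₀ y u₀ hx hy
    refine ⟨g, hgx, by rw [← inSet_apply_of_mem_autGroup hg, hgu], fun z w => ?_⟩
    rw [outSet_apply_of_mem_autGroup hg, outSet_apply_of_mem_autGroup hg]
    exact (Set.image_injective.mpr g.injective).eq_iff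
  obtain ⟨g, hg, rfl, rfl⟩ := hat x₀ u₀ v u hx₀ hvu
  obtain ⟨y, hy, rfl⟩ : w ∈ g '' inSet E u₀ := by
    rw [← inSet_apply_of_mem_autGroup hg]; exact hwu
  rw [outSet_apply_of_mem_autGroup hg, outSet_apply_of_mem_autGroup hg, hconst y hy]

lemma outSet_eq_of_not_injOn_or (hat : ArcTransitive E) {p : ℕ} (hp : p.Prime)
    (hin : ∀ u, (inSet E u).ncard = p) (hout : ∀ u, (outSet E u).ncard = p) {u₀ : V}
    (h : ¬ Set.InjOn (outSet E) (inSet E u₀) ∨ ¬ Set.InjOn (inSet E) (outSet E u₀))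
    {v u w : V} (hvu : E v u) (hwu : E w u) : outSet E w = outSet E v := by
  rcases h with h | h
  · exact outSet_eq_of_not_injOn hat hp hin h hvu hwu
  · have hsub : outSet E v ⊆ outSet E w := fun u' hvu' => by
      have hI : inSet E u' = inSet E u :=
        outSet_eq_of_not_injOn (E := flip E) hat.flip hp hout h hvu hvu'
      show w ∈ inSet E u'
      rw [hI]
      exact hwu
    exact (Set.eq_of_subset_of_ncard_le hsub (by rw [hout, hout])
      (Set.finite_of_ncard_pos (by rw [hout]; exact hp.pos))).symm

lemma apply_eq_of_eqOn_inSet (hinj : ∀ w, Set.InjOn (inSet E) (outSet E w))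
    {g h : Equiv.Perm V} (hg : g ∈ autGroup E) (hh : h ∈ autGroup E) {x : V}
    (hne : (inSet E x).Nonempty) (hx : Set.EqOn g h (inSet E x)) : g x = h x := by
  obtain ⟨w, hw⟩ := hne
  have hgh : inSet E (g x) = inSet E (h x) := by
    rw [inSet_apply_of_mem_autGroup hg, inSet_apply_of_mem_autGroup hh, hx.image_eq]
  refine hinj (g w) ((hg w x).mp hw) ?_ hgh
  rw [hx hw]
  exact (hh w x).mp hw

lemma eq_of_eqOn_fibre {φ : V → ℤ} (hhom : ∀ u v, E u v → φ v = φ u + 1)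
    (hinjOut : ∀ u, Set.InjOn (outSet E) (inSet E u))
    (hinjIn : ∀ u, Set.InjOn (inSet E) (outSet E u))
    (hin : ∀ x, (inSet E x).Nonempty) (hout : ∀ x, (outSet E x).Nonempty)
    {g h : Equiv.Perm V} (hg : g ∈ autGroup E) (hh : h ∈ autGroup E) {i : ℤ}
    (hgh : Set.EqOn g h (φ ⁻¹' {i})) : g = h := by
  have hlevel : ∀ d : ℤ, Set.EqOn g h (φ ⁻¹' {i + d}) := by
    intro d
    induction d using Int.induction_on with
    | zero => simpa using hgh
    | succ n ih =>
      intro x (hx : φ x = i + (n + 1))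
      exact apply_eq_of_eqOn_inSet hinjIn hg hh (hin x) fun w hw =>
        ih (show φ w = i + n by have := hhom w x hw; omega)
    | pred n ih =>
      intro x (hx : φ x = i + (-n - 1))
      exact apply_eq_of_eqOn_inSet (E := flip E) hinjOut (mem_autGroup_flip hg)
        (mem_autGroup_flip hh) (hout x) fun w hw =>
          ih (show φ w = i + -n by have := hhom x w hw; omega)
  exact Equiv.ext fun x => hlevel (φ x - i) (by simp)

lemma comp_eq_of_apply_eq (hconn : DConnected E) {φ : V → ℤ}
    (hhom : ∀ u v, E u v → φ v = φ u + 1) {g : Equiv.Perm V} (hg : g ∈ autGroup E) {v : V}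
    (hv : g v = v) : φ ∘ g = φ := by
  have hshift : ∀ y, φ (g v) - φ v = φ (g y) - φ y := by
    intro y
    induction hconn v y with
    | refl => rfl
    | tail _ hbc ih =>
      rcases hbc with hbc | hcb
      · have := hhom _ _ hbc; have := hhom _ _ ((hg _ _).mp hbc); omega
      · have := hhom _ _ hcb; have := hhom _ _ ((hg _ _).mp hcb); omega
  funext x
  have := hshift x
  rw [hv] at this
  simp only [Function.comp_apply]
  omega

lemma finite_vStab_of_injOn (hconn : DConnected E) {φ : V → ℤ}
    (hhom : ∀ u v, E u v → φ v = φ u + 1) (hfin : ∀ i, (φ ⁻¹' {i}).Finite)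
    (hinjOut : ∀ u, Set.InjOn (outSet E) (inSet E u))
    (hinjIn : ∀ u, Set.InjOn (inSet E) (outSet E u))
    (hin : ∀ x, (inSet E x).Nonempty) (hout : ∀ x, (outSet E x).Nonempty) (v : V) :
    Finite (vStab E v) := by
  have := (hfin (φ v)).to_subtype
  let restrict : vStab E v → φ ⁻¹' {φ v} → φ ⁻¹' {φ v} := fun g x =>
    ⟨(g : Equiv.Perm V) x,
      (congrFun (comp_eq_of_apply_eq hconn hhom (g : autGroup E).2 g.2) x).trans x.2⟩
  refine Finite.of_injective restrict fun g h hgh => ?_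
  refine Subtype.ext (Subtype.ext (eq_of_eqOn_fibre hhom hinjOut hinjIn hin hout
    (g : autGroup E).2 (h : autGroup E).2 (i := φ v) fun x hx => ?_))
  exact congrArg Subtype.val (congrFun hgh ⟨x, hx⟩)

def arcsFrom (E : V → V → Prop) (K : ℕ) (v : V) : Type _ :=
  {f : Fin (K + 1) → V // IsKArc E K f ∧ f 0 = v}

def arcsFrom.comp {K : ℕ} {v : V} (g : vStab E v) (f : arcsFrom E K v) : arcsFrom E K v :=
  ⟨(g : Equiv.Perm V) ∘ f.1, fun i => ((g : autGroup E).2 _ _).mp (f.2.1 i), by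
    rw [Function.comp_apply, f.2.2]; exact g.2⟩

lemma HighlyArcTransitive.surjective_arcsFrom_comp (hhat : HighlyArcTransitive E) {K : ℕ}
    {v : V} (f₀ : arcsFrom E K v) : Function.Surjective fun g : vStab E v => f₀.comp g := by
  intro f
  obtain ⟨g, hg, hgf⟩ := hhat K f₀.1 f.1 f₀.2.1 f.2.1
  have hgv : g v = v := by simpa [f₀.2.2, f.2.2] using hgf 0
  exact ⟨⟨⟨g, hg⟩, hgv⟩, Subtype.ext (funext hgf)⟩

def binaryArc (s : V → Bool → V) : (K : ℕ) → (Fin K → Bool) → V → Fin (K + 1) → V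
  | 0, _, v => fun _ => v
  | K + 1, ε, v => Fin.cons v (binaryArc s K (Fin.tail ε) (s v (ε 0)))

lemma binaryArc_zero (s : V → Bool → V) (K : ℕ) (ε : Fin K → Bool) (v : V) :
    binaryArc s K ε v 0 = v := by
  cases K <;> rfl

lemma isKArc_binaryArc {s : V → Bool → V} (hs : ∀ x c, E x (s x c)) (K : ℕ)
    (ε : Fin K → Bool) (v : V) : IsKArc E K (binaryArc s K ε v) := by
  induction K generalizing v with
  | zero => exact fun i => i.elim0
  | succ K ih =>
    intro i
    refine Fin.cases ?_ (fun j => ?_) i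
    · simpa [binaryArc, binaryArc_zero] using hs v (ε 0)
    · simpa [binaryArc, ← Fin.succ_castSucc] using ih (Fin.tail ε) (s v (ε 0)) j

lemma binaryArc_injective {s : V → Bool → V} (hs : ∀ x, Function.Injective (s x)) (K : ℕ)
    (v : V) : Function.Injective fun ε => binaryArc s K ε v := by
  induction K generalizing v with
  | zero => exact fun ε ε' _ => funext fun i => i.elim0
  | succ K ih =>
    intro ε ε' h
    have htail := Fin.cons_right_injective (α := fun _ => V) v h
    have h0 : ε 0 = ε' 0 := hs v (by simpa [binaryArc_zero] using congrFun htail 0)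
    simp only [h0] at htail
    rw [← Fin.cons_self_tail ε, ← Fin.cons_self_tail ε', h0, ih _ htail]

lemma HighlyArcTransitive.two_pow_le_card_vStab (hhat : HighlyArcTransitive E)
    {s : V → Bool → V} (hs : ∀ x c, E x (s x c)) (hsinj : ∀ x, Function.Injective (s x))
    (v : V) [Finite (vStab E v)] (K : ℕ) : 2 ^ K ≤ Nat.card (vStab E v) := by
  let ι : (Fin K → Bool) → arcsFrom E K v := fun ε =>
    ⟨binaryArc s K ε v, isKArc_binaryArc hs K ε v, binaryArc_zero s K ε v⟩
  have hι : Function.Injective ι := fun ε ε' h =>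
    binaryArc_injective hsinj K v (congrArg Subtype.val h)
  have hσ := hhat.surjective_arcsFrom_comp (ι fun _ => true)
  have : Finite (arcsFrom E K v) := Finite.of_surjective _ hσ
  calc 2 ^ K = Nat.card (Fin K → Bool) := by simp
    _ ≤ Nat.card (arcsFrom E K v) := Nat.card_le_card_of_injective ι hι
    _ ≤ Nat.card (vStab E v) := Nat.card_le_card_of_surjective _ hσ

lemma HighlyArcTransitive.not_forall_injOn (hhat : HighlyArcTransitive E)
    (hconn : DConnected E) {φ : V → ℤ} (hhom : ∀ u v, E u v → φ v = φ u + 1)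
    (hfin : ∀ i, (φ ⁻¹' {i}).Finite) (hin : ∀ x, (inSet E x).Nonempty)
    (hout : ∀ x, 1 < (outSet E x).ncard) (v : V) :
    ¬ ∀ u, Set.InjOn (outSet E) (inSet E u) ∧ Set.InjOn (inSet E) (outSet E u) := by
  intro hinj
  have hbranch : ∀ x, ∃ s : Bool → V, Function.Injective s ∧ ∀ c, E x (s c) := by
    intro x
    obtain ⟨a, b, ha, hb, hab⟩ :=
      (Set.one_lt_ncard_iff (Set.finite_of_ncard_pos (hout x).le)).mp (hout x)
    refine ⟨fun c => bif c then a else b, fun c c' => ?_, fun c => by cases c <;> assumption⟩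
    cases c <;> cases c' <;> simp [hab, hab.symm]
  choose s hsinj hs using hbranch
  have := finite_vStab_of_injOn hconn hhom hfin (fun u => (hinj u).1) (fun u => (hinj u).2) hin
    (fun x => Set.nonempty_of_ncard_ne_zero (by have := hout x; omega)) v
  exact (Nat.card (vStab E v)).lt_two_pow_self.not_ge (hhat.two_pow_le_card_vStab hs hsinj v _)

lemma altRel_iff_of_outSet_eq
    (hcoh : ∀ {v u w : V}, E v u → E w u → outSet E w = outSet E v) {v u : V} (hvu : E v u)
    (b : (Digr.mk V E).Arc) :
    altRel (Digr.mk V E) ⟨(v, u), hvu⟩ b ↔ E b.1.1 u ∧ E v b.1.2 := by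
  have hstep : ∀ a b : (Digr.mk V E).Arc, (a.1.1 = b.1.1 ∨ a.1.2 = b.1.2) →
      E a.1.1 u ∧ E v a.1.2 → E b.1.1 u ∧ E v b.1.2 := by
    rintro a b (h | h) ⟨ha₁, ha₂⟩
    · refine ⟨h ▸ ha₁, ?_⟩
      show b.1.2 ∈ outSet E v
      rw [← hcoh hvu ha₁, h]
      exact b.2
    · refine ⟨?_, h ▸ ha₂⟩
      show u ∈ outSet E b.1.1
      rw [hcoh ha₂ (h ▸ b.2)]
      exact hvu
  have hinv : ∀ a b, altRel (Digr.mk V E) a b →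
      (E a.1.1 u ∧ E v a.1.2 ↔ E b.1.1 u ∧ E v b.1.2) := by
    intro a b h
    induction h with
    | rel a b hab => exact ⟨hstep a b hab, hstep b a (hab.imp Eq.symm Eq.symm)⟩
    | refl => rfl
    | symm _ _ _ ih => exact ih.symm
    | trans _ _ _ _ _ ih₁ ih₂ => exact ih₁.trans ih₂
  refine ⟨fun h => (hinv _ b h).mp ⟨hvu, hvu⟩, fun ⟨hb₁, hb₂⟩ => ?_⟩
  exact .trans _ ⟨(b.1.1, u), hb₁⟩ _ (.rel _ _ (.inr rfl)) (.rel _ _ (.inl rfl))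

theorem two_ended_prime_valency_alternets_complete_bipartite_general
    {V : Type u} (E : V → V → Prop)
    (h2 : TwoEnded E) (hhat : HighlyArcTransitive E)
    (p : ℕ) (hp : p.Prime) (hout : ∀ v : V, (outSet E v).ncard = p)
    (φ : V → ℤ)
    (hhom : ∀ u v : V, E u v → φ v = φ u + 1)
    (m : ℕ) (hm : 2 < m) (hfib : ∀ i : ℤ, (φ ⁻¹' {i}).ncard = m) :
    ∀ v u : V, ∀ hvu : E v u,
      (∀ w : V, E w u → outSet E w = outSet E v) ∧
      (outSet E v).ncard = p ∧ (inSet E u).ncard = p ∧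
      (∀ b : (Digr.mk V E).Arc,
        altRel (Digr.mk V E) ⟨(v, u), hvu⟩ b ↔ (E b.1.1 u ∧ E v b.1.2)) := by
  intro v u hvu
  have hin : ∀ x, (inSet E x).ncard = p := fun x =>
    (hhat.vertexTransitive.ncard_inSet_eq x v).trans <| ncard_inSet_eq_of_ncard_outSet_eq hhom
      (by omega) hfib hout fun y => hhat.vertexTransitive.ncard_inSet_eq y v
  obtain ⟨u₀, hu₀⟩ :
      ∃ u₀, ¬ Set.InjOn (outSet E) (inSet E u₀) ∨ ¬ Set.InjOn (inSet E) (outSet E u₀) := by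
    by_contra! hrigid
    refine hhat.not_forall_injOn h2.1 hhom
      (fun i => Set.finite_of_ncard_pos (by rw [hfib]; omega))
      (fun x => Set.nonempty_of_ncard_ne_zero (by simp [hin, hp.ne_zero]))
      (fun x => by simpa [hout] using hp.one_lt) v hrigid
  have hcoh : ∀ {v u w : V}, E v u → E w u → outSet E w = outSet E v :=
    outSet_eq_of_not_injOn_or hhat.arcTransitive hp hin hout hu₀
  exact ⟨fun w hwu => hcoh hvu hwu, hout v, hin u, altRel_iff_of_outSet_eq hcoh hvu⟩

/-- In a two-ended highly-arc-transitive digraph of prime out-valency `p`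
whose fibres have size `m > 2`, every alternet is a complete bipartite digraph
`K⃗_{p,p}`: for each arc `(v,u)` all `p` in-neighbours of `u` have the same
out-neighbourhood `out(v)` of size `p`, and these `2p` vertices with all `p²` arcs between
them form an alternet. -/
theorem two_ended_prime_valency_alternets_complete_bipartite
    {V : Type u} (E : V → V → Prop)
    (h2 : TwoEnded E) (hhat : HighlyArcTransitive E)
    (p : ℕ) (hp : p.Prime) (hout : ∀ v : V, (outSet E v).ncard = p)
    (φ : V → ℤ) (hsurj : Function.Surjective φ)
    (hhom : ∀ u v : V, E u v → φ v = φ u + 1)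
    (m : ℕ) (hm : 2 < m) (hfib : ∀ i : ℤ, (φ ⁻¹' {i}).ncard = m) :
    ∀ v u : V, ∀ hvu : E v u,
      (∀ w : V, E w u → outSet E w = outSet E v) ∧
      (outSet E v).ncard = p ∧ (inSet E u).ncard = p ∧
      (∀ b : (Digr.mk V E).Arc,
        altRel (Digr.mk V E) ⟨(v, u), hvu⟩ b ↔ (E b.1.1 u ∧ E v b.1.2)) :=
  two_ended_prime_valency_alternets_complete_bipartite_general E h2 hhat p hp hout φ hhom m hm hfib
end
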